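/- arXiv:2001.08492 — 9 statements merged into one kernel-verified Lean document; each statement's English description precedes it below -/
import Mathlib

section
/- Let q ≥ 2 be an integer and {X_n} a stationary stochastic process with values in {0,...,q-1}. Then the probability that there exist indices m < n₀ such that X_m ≠ X_{n₀} while X_{n₀} = X_{n₀+1} = X_{n₀+2} = ... (all digits eventually constant but not from the start) is zero. -/
/-!
The sets `constFrom n` of sequences that are constant from index `n` on increase with `n`, and
the shift maps `constFrom n` back onto `constFrom (n + 1)`, so under a shift-invariant law they
all have the same measure. A finite measure cannot grow along an increasing union of sets of
equal measure, so the event "eventually constant but not constant", which is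
`(⋃ n, constFrom n) \ constFrom 0`, is null.
-/

open MeasureTheory Set

theorem measure_iUnion_diff_eq_zero_of_monotone {Ω : Type*} [MeasurableSpace Ω] {μ : Measure Ω}
    [IsFiniteMeasure μ] {E : ℕ → Set Ω} (hE : Monotone E) (h₀ : NullMeasurableSet (E 0) μ)
    (hconst : ∀ n, μ (E n) = μ (E 0)) : μ ((⋃ n, E n) \ E 0) = 0 := by
  rw [measure_sdiff (subset_iUnion E 0) h₀ (measure_ne_top μ _), hE.measure_iUnion]
  simp [hconst]

namespace Sequence

variable {α : Type*}

def shift (f : ℕ → α) : ℕ → α := fun n => f (n + 1)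

def constFrom (n : ℕ) : Set (ℕ → α) := {f | ∀ k, n ≤ k → f k = f n}

theorem constFrom_mono : Monotone (constFrom (α := α)) := by
  intro a b hab f hf k hk
  rw [hf k (hab.trans hk), hf b hab]

theorem preimage_shift_constFrom (n : ℕ) :
    shift ⁻¹' constFrom n = (constFrom (n + 1) : Set (ℕ → α)) := by
  ext f
  refine ⟨fun hf k hk => ?_, fun hf k hk => hf (k + 1) (by omega)⟩
  obtain ⟨j, rfl⟩ : ∃ j, k = j + 1 := ⟨k - 1, by omega⟩
  exact hf j (by omega)

def eventuallyConstNotConst : Set (ℕ → α) :=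
  {f | ∃ m n₀, m < n₀ ∧ f m ≠ f n₀ ∧ ∀ k, n₀ ≤ k → f k = f n₀}

theorem eventuallyConstNotConst_eq_diff :
    (eventuallyConstNotConst : Set (ℕ → α)) = (⋃ n, constFrom n) \ constFrom 0 := by
  ext f
  simp only [eventuallyConstNotConst, mem_ofPred_eq, mem_sdiff, mem_iUnion]
  constructor
  · rintro ⟨m, n₀, -, hne, htail⟩
    refine ⟨⟨n₀, htail⟩, fun h₀ => hne ?_⟩
    rw [h₀ m m.zero_le, h₀ n₀ n₀.zero_le]
  · rintro ⟨⟨n, htail⟩, hnot⟩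
    obtain ⟨m, hm, hne⟩ : ∃ m < n, f m ≠ f n := by
      by_contra! hhead
      have hconst : ∀ k, f k = f n := fun k => (lt_or_ge k n).elim (hhead k) (htail k)
      exact hnot fun k _ => (hconst k).trans (hconst 0).symm
    exact ⟨m, n, hm, hne, htail⟩

variable [MeasurableSpace α]

theorem measurable_shift : Measurable (shift : (ℕ → α) → ℕ → α) :=
  measurable_pi_lambda _ fun n => measurable_pi_apply (n + 1)

theorem measurableSet_constFrom [MeasurableEq α] (n : ℕ) :
    MeasurableSet (constFrom n : Set (ℕ → α)) := by
  simp only [constFrom, ofPred_forall]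
  exact .iInter fun k => .iInter fun _ =>
    measurableSet_eq_fun (measurable_pi_apply k) (measurable_pi_apply n)

theorem measure_constFrom_eq [MeasurableEq α] {ν : Measure (ℕ → α)}
    (hν : MeasurePreserving shift ν ν) (n : ℕ) : ν (constFrom n) = ν (constFrom 0) := by
  induction n with
  | zero => rfl
  | succ n ih =>
    rw [← preimage_shift_constFrom,
      hν.measure_preimage (measurableSet_constFrom n).nullMeasurableSet, ih]

theorem measure_eventuallyConstNotConst_eq_zero [MeasurableEq α]
    {ν : Measure (ℕ → α)} [IsFiniteMeasure ν] (hν : MeasurePreserving shift ν ν) :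
    ν eventuallyConstNotConst = 0 := by
  rw [eventuallyConstNotConst_eq_diff]
  exact measure_iUnion_diff_eq_zero_of_monotone constFrom_mono
    (measurableSet_constFrom 0).nullMeasurableSet (measure_constFrom_eq hν)

end Sequence

open Sequence in
theorem stmt_0_general {Ω : Type*} [MeasurableSpace Ω] (P : Measure Ω) [IsProbabilityMeasure P]
    (X : ℕ → Ω → ℕ)
    (hmeas : ∀ n, Measurable (X n))
    (hstat : Measure.map (fun ω => fun n => X (n + 1) ω) P
      = Measure.map (fun ω => fun n => X n ω) P) :
    P {ω | ∃ m n₀, m < n₀ ∧ X m ω ≠ X n₀ ω ∧ ∀ k, n₀ ≤ k → X k ω = X n₀ ω} = 0 := by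
  set path : Ω → ℕ → ℕ := fun ω n => X n ω
  have hpath : Measurable path := measurable_pi_lambda _ hmeas
  have hshift : MeasurePreserving shift (P.map path) (P.map path) :=
    ⟨measurable_shift, by rw [Measure.map_map measurable_shift hpath]; exact hstat⟩
  refine le_antisymm ?_ zero_le
  calc P (path ⁻¹' eventuallyConstNotConst) ≤ P.map path eventuallyConstNotConst :=
        Measure.le_map_apply hpath.aemeasurable _
    _ = 0 := measure_eventuallyConstNotConst_eq_zero hshift

/-- Under stationarity, the probability that the digits are eventually constant
but not constant from the start is zero. -/
theorem stmt_0 {Ω : Type*} [MeasurableSpace Ω] (P : Measure Ω) [IsProbabilityMeasure P]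
    (q : ℕ) (hq : 2 ≤ q) (X : ℕ → Ω → ℕ)
    (hmeas : ∀ n, Measurable (X n)) (hval : ∀ n ω, X n ω < q)
    (hstat : Measure.map (fun ω => fun n => X (n + 1) ω) P
      = Measure.map (fun ω => fun n => X n ω) P) :
    P {ω | ∃ m n₀, m < n₀ ∧ X m ω ≠ X n₀ ω ∧ ∀ k, n₀ ≤ k → X k ω = X n₀ ω} = 0 :=
  stmt_0_general P X hmeas hstat
end

section
/- Let q ≥ 2 be an integer and F the CDF of a probability distribution on [0,1] satisfying F(x) = F(0) + Σ_{j=0}^{q-1} [F((x+j)/q) - F(j/q)] for all base-q fractions x in (0,1). Then F is continuous at every base-q fraction in (0,1). -/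
/-!
Write `J y = F y - F (y⁻)` for the jump of `F`, i.e. `μ {y}`. Letting a base-`q` fraction `u`
increase to a base-`q` fraction `y` in the difference of the functional equations at `y` and
`u` gives `J y = ∑ j < q, J ((y + j) / q)`, and iterating, `μ {x}` equals the mass of the finite
level set `{(x + i) / q ^ m | i < q ^ m}` for every `m`. For `x = k / q ^ n` with `0 < k < q ^ n` these
levels are pairwise disjoint: a common point of levels `m < m + d + 1` would give
`q ^ n ∣ k (q ^ (d + 1) - 1)`, hence `q ^ n ∣ k` as `q` is coprime to `q ^ (d + 1) - 1`.
Infinitely many disjoint sets of equal mass in a finite measure force `μ {x} = 0`.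
-/

open MeasureTheory ProbabilityTheory Filter Topology Finset Function

def IsBaseFraction (q : ℕ) (x : ℝ) : Prop :=
  ∃ n k : ℕ, 1 ≤ n ∧ 0 < k ∧ k < q ^ n ∧ x = (k : ℝ) / (q : ℝ) ^ n

namespace IsBaseFraction

variable {q : ℕ} {x : ℝ}

theorem two_le (hx : IsBaseFraction q x) : 2 ≤ q := by
  obtain ⟨n, k, -, hk, hkq, -⟩ := hx
  by_contra! hq
  have : q ^ n ≤ 1 := pow_le_one₀ (Nat.zero_le q) (by omega)
  omega

theorem add_div (hx : IsBaseFraction q x) {j : ℕ} (hj : j < q) :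
    IsBaseFraction q ((x + j) / q) := by
  obtain ⟨n, k, hn, hk, hkq, rfl⟩ := hx
  refine ⟨n + 1, k + j * q ^ n, by omega, by omega, ?_, ?_⟩
  · calc k + j * q ^ n < (j + 1) * q ^ n := by linarith
      _ ≤ q * q ^ n := Nat.mul_le_mul_right _ hj
      _ = q ^ (n + 1) := (pow_succ' q n).symm
  · have : (q : ℝ) ≠ 0 := Nat.cast_ne_zero.2 (by omega)
    push_cast
    field_simp
    ring

theorem exists_seq_tendsto_nhdsLT (hx : IsBaseFraction q x) :
    ∃ u : ℕ → ℝ, (∀ m, IsBaseFraction q (u m)) ∧ Tendsto u atTop (𝓝[<] x) := by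
  have hq := hx.two_le
  obtain ⟨n, k, hn, hk, hkq, rfl⟩ := hx
  have hq1 : (1 : ℝ) < q := by exact_mod_cast hq
  refine ⟨fun m => k / (q : ℝ) ^ n - (q : ℝ)⁻¹ ^ (m + (n + 1)), fun m => ?_, ?_⟩
  · have h2 : 2 ≤ k * q ^ (m + 1) :=
      le_trans hq (Nat.le_mul_of_pos_left _ hk |>.trans' (Nat.le_self_pow (by omega) q))
    have hpow : q ^ (m + (n + 1)) = q ^ n * q ^ (m + 1) := by
      rw [← pow_add]; congr 1; omega
    refine ⟨m + (n + 1), k * q ^ (m + 1) - 1, by omega, by omega, ?_, ?_⟩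
    · have : k * q ^ (m + 1) ≤ q ^ n * q ^ (m + 1) := Nat.mul_le_mul_right _ hkq.le
      omega
    · push_cast [Nat.cast_sub (by omega : 1 ≤ k * q ^ (m + 1))]
      have hpowR : (q : ℝ) ^ (m + (n + 1)) = (q : ℝ) ^ n * (q : ℝ) ^ (m + 1) := by
        exact_mod_cast hpow
      rw [inv_pow, hpowR]
      field_simp
  · have h0 : Tendsto (fun m : ℕ => (q : ℝ)⁻¹ ^ (m + (n + 1))) atTop (𝓝 0) :=
      (tendsto_pow_atTop_nhds_zero_of_lt_one (by positivity)
        (inv_lt_one_of_one_lt₀ hq1)).comp (tendsto_add_atTop_nat (n + 1))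
    refine tendsto_nhdsWithin_of_tendsto_nhds_of_eventually_within _ ?_
      (Eventually.of_forall fun m => Set.mem_Iio.2 (sub_lt_self _ (by positivity)))
    simpa using tendsto_const_nhds.sub h0

theorem add_div_pow_ne (hx : IsBaseFraction q x) {m m' : ℕ} (hm : m < m') (i i' : ℕ) :
    (x + i) / (q : ℝ) ^ m ≠ (x + i') / (q : ℝ) ^ m' := by
  have hq := hx.two_le
  obtain ⟨n, k, -, hk, hkq, rfl⟩ := hx
  obtain ⟨d, rfl⟩ := Nat.exists_eq_add_of_lt hm
  intro h
  have hq0 : (q : ℝ) ≠ 0 := by positivity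
  have hreal : (k : ℝ) * (q ^ (d + 1) - 1) = q ^ n * (i' - i * q ^ (d + 1)) := by
    rw [show m + d + 1 = m + (d + 1) by ring, pow_add] at h
    field_simp at h
    linear_combination h
  have hint : (k : ℤ) * (q ^ (d + 1) - 1) = q ^ n * (i' - i * q ^ (d + 1)) := by
    exact_mod_cast hreal
  have hcop : IsCoprime ((q : ℤ) ^ n) ((q : ℤ) ^ (d + 1) - 1) :=
    IsCoprime.pow_left ⟨(q : ℤ) ^ d, -1, by ring⟩
  have hdvd : (q : ℤ) ^ n ∣ k := hcop.dvd_of_dvd_mul_right ⟨_, hint⟩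
  have : q ^ n ≤ k := by exact_mod_cast Int.le_of_dvd (by positivity) hdvd
  omega

end IsBaseFraction

theorem Finset.sum_range_mul_eq_sum_sum {M : Type*} [AddCommMonoid M] (f : ℕ → M) (a b : ℕ) :
    ∑ i ∈ range (a * b), f i = ∑ j ∈ range b, ∑ i ∈ range a, f (a * j + i) := by
  induction b with
  | zero => simp
  | succ b ih => rw [Nat.mul_succ, sum_range_add, ih, sum_range_succ]

theorem MeasureTheory.eq_zero_of_pairwise_disjoint_of_measure_eq {α : Type*}
    [MeasurableSpace α] {μ : Measure α} [IsFiniteMeasure μ] {S : ℕ → Set α}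
    (hS : ∀ m, MeasurableSet (S m)) (hd : Pairwise (Disjoint on S)) {c : ENNReal}
    (hc : ∀ m, μ (S m) = c) : c = 0 := by
  by_contra h
  have := measure_iUnion (μ := μ) hd hS
  simp only [hc, ENNReal.tsum_const_eq_top_of_ne_zero h] at this
  exact measure_ne_top μ _ this

section FunctionalEquation

variable {q : ℕ} {f : ℝ → ℝ}
  (heq : ∀ x, IsBaseFraction q x → f x = f 0 + ∑ j ∈ range q, (f ((x + j) / q) - f (j / q)))
include heq

theorem Monotone.sub_leftLim_eq_sum (hf : Monotone f) {y : ℝ} (hy : IsBaseFraction q y) :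
    f y - leftLim f y = ∑ j ∈ range q, (f ((y + j) / q) - leftLim f ((y + j) / q)) := by
  have hq : (0 : ℝ) < q := by have := hy.two_le; positivity
  obtain ⟨u, hu, hlim⟩ := hy.exists_seq_tendsto_nhdsLT
  have hdiff : ∀ m, f y - f (u m) = ∑ j ∈ range q, (f ((y + j) / q) - f ((u m + j) / q)) := by
    intro m
    rw [heq y hy, heq (u m) (hu m), add_sub_add_left_eq_sub, ← sum_sub_distrib]
    exact sum_congr rfl fun j _ => by ring
  have hshift : ∀ j : ℕ, Tendsto (fun m => (u m + j) / q) atTop (𝓝[<] ((y + j) / q)) := by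
    intro j
    have hcont : Continuous fun t : ℝ => (t + j) / q := by fun_prop
    refine (hcont.continuousWithinAt.tendsto_nhdsWithin fun t (ht : t < y) => ?_).comp hlim
    exact div_lt_div_of_pos_right (by linarith) hq
  refine tendsto_nhds_unique (f := fun m => f y - f (u m)) (l := atTop) ?_ ?_
  · exact tendsto_const_nhds.sub ((hf.tendsto_leftLim y).comp hlim)
  · simp_rw [hdiff]
    exact tendsto_finsetSum _ fun j _ =>
      tendsto_const_nhds.sub ((hf.tendsto_leftLim _).comp (hshift j))

end FunctionalEquation

namespace StieltjesFunction

theorem continuousAt_of_measure_singleton_eq_zero (f : StieltjesFunction ℝ) {x : ℝ}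
    (hx : f.measure {x} = 0) : ContinuousAt f x := by
  rw [f.measure_singleton, ENNReal.ofReal_eq_zero, sub_nonpos] at hx
  rw [f.mono.continuousAt_iff_leftLim_eq_rightLim, f.rightLim_eq]
  exact le_antisymm (f.mono.leftLim_le le_rfl) hx

variable {q : ℕ} {f : StieltjesFunction ℝ}
  (heq : ∀ x, IsBaseFraction q x → f x = f 0 + ∑ j ∈ range q, (f ((x + j) / q) - f (j / q)))
include heq

theorem measure_singleton_eq_sum {y : ℝ} (hy : IsBaseFraction q y) :
    f.measure {y} = ∑ j ∈ range q, f.measure {(y + j) / q} := by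
  simp only [f.measure_singleton]
  rw [← ENNReal.ofReal_sum_of_nonneg fun j _ => sub_nonneg.2 (f.mono.leftLim_le le_rfl),
    f.mono.sub_leftLim_eq_sum heq hy]

theorem measure_singleton_eq_sum_pow (m : ℕ) {y : ℝ} (hy : IsBaseFraction q y) :
    f.measure {y} = ∑ i ∈ range (q ^ m), f.measure {(y + i) / (q : ℝ) ^ m} := by
  induction m generalizing y with
  | zero => simp
  | succ m ih =>
    have hq : (q : ℝ) ≠ 0 := by have := hy.two_le; positivity
    rw [measure_singleton_eq_sum heq hy, pow_succ', sum_range_mul_eq_sum_sum, sum_comm]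
    refine sum_congr rfl fun j hj => (ih (hy.add_div (mem_range.1 hj))).trans ?_
    refine sum_congr rfl fun i _ => ?_
    congr 2
    push_cast
    field_simp
    ring

theorem measure_singleton_eq_zero [IsFiniteMeasure f.measure] {x : ℝ} (hx : IsBaseFraction q x) :
    f.measure {x} = 0 := by
  have hq : (q : ℝ) ≠ 0 := by have := hx.two_le; positivity
  let S : ℕ → Set ℝ := fun m => ⋃ i ∈ range (q ^ m), {(x + i) / (q : ℝ) ^ m}
  refine eq_zero_of_pairwise_disjoint_of_measure_eq (μ := f.measure) (S := S)
    (fun m => (range _).measurableSet_biUnion fun i _ => measurableSet_singleton _) ?_ ?_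
  · intro m m' hm
    simp only [S, onFun, Set.disjoint_iUnion_left, Set.disjoint_iUnion_right,
      Set.disjoint_singleton]
    intro i _ i' _
    rcases hm.lt_or_gt with h | h
    · exact hx.add_div_pow_ne h i' i
    · exact (hx.add_div_pow_ne h i i').symm
  · intro m
    rw [measure_biUnion_finset ?_ fun i _ => measurableSet_singleton _,
      ← measure_singleton_eq_sum_pow heq m hx]
    intro i _ i' _ hi
    refine Set.disjoint_singleton.2 fun h => hi ?_
    rwa [div_left_inj' (pow_ne_zero _ hq), add_right_inj, Nat.cast_inj] at h

end StieltjesFunction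

theorem stmt_1_general (q : ℕ) (μ : Measure ℝ) [IsProbabilityMeasure μ]
    (F : ℝ → ℝ) (hF : ∀ x, F x = (μ (Set.Iic x)).toReal)
    (heq : ∀ x : ℝ, (∃ n k : ℕ, 1 ≤ n ∧ 0 < k ∧ k < q ^ n ∧ x = (k : ℝ) / (q : ℝ) ^ n) →
      F x = F 0 + ∑ j ∈ Finset.range q, (F ((x + j) / q) - F ((j : ℝ) / q))) :
    ∀ x : ℝ, (∃ n k : ℕ, 1 ≤ n ∧ 0 < k ∧ k < q ^ n ∧ x = (k : ℝ) / (q : ℝ) ^ n) →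
      ContinuousAt F x := by
  obtain rfl : F = cdf μ := funext fun y => by rw [hF, cdf_eq_real, measureReal_def]
  intro x hx
  have : IsFiniteMeasure (cdf μ).measure := by rw [measure_cdf]; infer_instance
  exact (cdf μ).continuousAt_of_measure_singleton_eq_zero
    (StieltjesFunction.measure_singleton_eq_zero heq hx)

/-- If a CDF of a probability measure on `[0,1]` satisfies the stationarity functional
equation at all base-`q` fractions, then it is continuous at every base-`q` fraction. -/
theorem stmt_1 (q : ℕ) (hq : 2 ≤ q) (μ : Measure ℝ) [IsProbabilityMeasure μ]
    (hsupp : μ (Set.Icc 0 1) = 1)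
    (F : ℝ → ℝ) (hF : ∀ x, F x = (μ (Set.Iic x)).toReal)
    (heq : ∀ x : ℝ, (∃ n k : ℕ, 1 ≤ n ∧ 0 < k ∧ k < q ^ n ∧ x = (k : ℝ) / (q : ℝ) ^ n) →
      F x = F 0 + ∑ j ∈ Finset.range q, (F ((x + j) / q) - F ((j : ℝ) / q))) :
    ∀ x : ℝ, (∃ n k : ℕ, 1 ≤ n ∧ 0 < k ∧ k < q ^ n ∧ x = (k : ℝ) / (q : ℝ) ^ n) →
      ContinuousAt F x :=
  stmt_1_general q μ F hF heq
end

section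
/- Let q ≥ 2 be an integer, {X_n}_{n≥1} a stochastic process with values in {0,...,q-1}, X = Σ_{n≥1} X_n q^{-n}, and F the CDF of X. Then {X_n}_{n≥1} is stationary if and only if F(x) = F(0) + Σ_{j=0}^{q-1} [F((x+j)/q) - F(j/q)] for all base-q fractions x in (0,1). -/
/-!
Let `μ` be the law of the digit sequence on `ℕ → Fin q`, `ν` its image under the shift, and
`F`, `G` the distribution functions of `ofDigits` under `μ` and `ν`. Splitting on the first digit
gives `∑ j, (F ((x + j) / q) - F (j / q)) = G x - G 0`, so the functional equation says
`F - F 0 = G - G 0` at the `q`-adic points of `(0, 1)`. Letting `x ↑ 1`, and using that the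
sequences of value `0` or `1` are mapped into themselves by the shift, gives `F 0 = G 0`; by
right-continuity `ofDigits` then has the same law under `μ` and `ν`.

Since `x ↦ q x mod 1` pulls the `q`-adic points of level `n` back to those of level `n + 1` minus
those of level `1`, the masses `mₙ` of these sets satisfy `mₙ₊₁ = mₙ + m₁`; as `n m₁ = mₙ ≤ 1`,
all of them vanish. Off the `q`-adic points `ofDigits` is injective, so `μ` and `ν`, having the
same image, are equal.
-/

open MeasureTheory ProbabilityTheory Set Filter Topology
open scoped ENNReal

theorem MeasureTheory.Measure.eq_of_map_eq_of_fiber_trivial {X Y : Type*}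
    [TopologicalSpace X] [CompactSpace X] [MeasurableSpace X] [BorelSpace X]
    [TopologicalSpace Y] [T2Space Y] [MeasurableSpace Y] [BorelSpace Y]
    {f : X → Y} (hf : Continuous f) {N : Set X} (hN : ∀ x ∉ N, ∀ y, f y = f x → y = x)
    {μ ν : Measure X} [IsFiniteMeasure μ] (hμν : μ.map f = ν.map f)
    (hμ : μ N = 0) (hν : ν N = 0) : μ = ν := by
  -- `f '' A` is compact, hence measurable, and `f ⁻¹' (f '' A)` exceeds `A` only inside `N`.
  have hsat : ∀ ρ : Measure X, ρ N = 0 → ∀ A, IsClosed A → ρ A = ρ.map f (f '' A) := by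
    intro ρ hρ A hA
    rw [Measure.map_apply hf.measurable (hA.isCompact.image hf).isClosed.measurableSet]
    refine le_antisymm (measure_mono (subset_preimage_image f A)) ?_
    calc ρ (f ⁻¹' (f '' A)) ≤ ρ (A ∪ N) := by
          refine measure_mono fun x ⟨y, hyA, hyx⟩ => ?_
          by_cases hx : x ∈ N
          · exact Or.inr hx
          · exact Or.inl (hN x hx y hyx ▸ hyA)
      _ ≤ ρ A + ρ N := measure_union_le A N
      _ = ρ A := by rw [hρ, add_zero]
  refine ext_of_generate_finite _ ?_ isPiSystem_isClosed (fun A hA => ?_) ?_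
  · rw [BorelSpace.measurable_eq (α := X), borel_eq_generateFrom_isClosed]
  · rw [hsat μ hμ A hA, hsat ν hν A hA, hμν]
  · rw [hsat μ hμ _ isClosed_univ, hsat ν hν _ isClosed_univ, hμν]

theorem ProbabilityTheory.cdf_sub_leftLim_cdf (ρ : Measure ℝ) [IsProbabilityMeasure ρ] (x : ℝ) :
    cdf ρ x - Function.leftLim (cdf ρ) x = ρ.real {x} := by
  rw [measureReal_def, ← measure_cdf ρ, StieltjesFunction.measure_singleton,
    ENNReal.toReal_ofReal (sub_nonneg.2 ((monotone_cdf ρ).leftLim_le le_rfl)), measure_cdf]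

namespace QAdicDigits

def shift {α : Type*} (s : ℕ → α) : ℕ → α := fun n => s (n + 1)

def qAdicLevel (q n : ℕ) : Set ℝ := {x | x ∈ Ioo 0 1 ∧ ∃ k : ℤ, (q : ℝ) ^ n * x = k}

def qAdic (q : ℕ) : Set ℝ := ⋃ n, qAdicLevel q n

variable {q : ℕ}

open Real

theorem ofDigits_eq_div (s : ℕ → Fin q) :
    ofDigits s = ((s 0 : ℝ) + ofDigits (shift s)) / q := by
  rw [ofDigits_eq_sum_add_ofDigits s 1, Finset.sum_range_one, ofDigitsTerm, zero_add, pow_one]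
  unfold shift
  ring

theorem ofDigits_le_div_iff (s : ℕ → Fin q) {x : ℝ} (hx0 : 0 ≤ x) (hx1 : x < 1) (j : ℕ) :
    ofDigits s ≤ (x + j) / q ↔ (s 0 : ℕ) < j ∨ (s 0 : ℕ) = j ∧ ofDigits (shift s) ≤ x := by
  have hq : (0 : ℝ) < q := by exact_mod_cast (s 0).pos
  have h0 := ofDigits_nonneg (shift s)
  have h1 := ofDigits_le_one (shift s)
  rw [ofDigits_eq_div, div_le_div_iff_of_pos_right hq]
  rcases lt_trichotomy (s 0 : ℕ) j with h | h | h
  · have : ((s 0 : ℕ) : ℝ) + 1 ≤ j := by exact_mod_cast h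
    simp only [h, true_or, iff_true]
    linarith
  · simp only [h, lt_irrefl, false_or, true_and]
    constructor <;> intro <;> linarith
  · have : (j : ℝ) + 1 ≤ ((s 0 : ℕ) : ℝ) := by exact_mod_cast h
    simp only [h.not_gt, h.ne', false_or, false_and, iff_false, not_le]
    linarith

theorem ofDigits_shift_nonpos (s : ℕ → Fin q) (h : ofDigits s ≤ 0) : ofDigits (shift s) ≤ 0 := by
  have hq : (0 : ℝ) < q := by exact_mod_cast (s 0).pos
  rw [ofDigits_eq_div, div_nonpos_iff] at h
  have : (0 : ℝ) ≤ (s 0 : ℕ) := Nat.cast_nonneg _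
  rcases h with ⟨_, h⟩ | ⟨h, _⟩ <;> linarith

theorem ofDigits_shift_eq_one (s : ℕ → Fin q) (h : ofDigits s = 1) : ofDigits (shift s) = 1 := by
  have hq : (0 : ℝ) < q := by exact_mod_cast (s 0).pos
  have hs0 : ((s 0 : ℕ) : ℝ) + 1 ≤ q := by exact_mod_cast (s 0).isLt
  rw [ofDigits_eq_div, div_eq_one_iff_eq hq.ne'] at h
  linarith [ofDigits_le_one (shift s)]

theorem qAdicLevel_zero : qAdicLevel q 0 = ∅ := by
  refine eq_empty_of_forall_notMem fun x ⟨⟨hx0, hx1⟩, k, hk⟩ => ?_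
  rw [pow_zero, one_mul] at hk
  subst hk
  have : (0 : ℤ) < k := by exact_mod_cast hx0
  have : k < (1 : ℤ) := by exact_mod_cast hx1
  omega

theorem qAdicLevel_one_subset (n : ℕ) : qAdicLevel q 1 ⊆ qAdicLevel q (n + 1) :=
  fun _ ⟨hx, k, hk⟩ => ⟨hx, (q : ℤ) ^ n * k, by push_cast; rw [← hk]; ring⟩

theorem measurableSet_qAdicLevel (n : ℕ) : MeasurableSet (qAdicLevel q n) := by
  have : qAdicLevel q n = Ioo 0 1 ∩ ⋃ k : ℤ, (fun x => (q : ℝ) ^ n * x) ⁻¹' {(k : ℝ)} := by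
    ext x; simp [qAdicLevel]
  rw [this]
  exact measurableSet_Ioo.inter
    (MeasurableSet.iUnion fun k => measurable_const_mul _ (measurableSet_singleton _))

theorem measurableSet_qAdic : MeasurableSet (qAdic q) :=
  MeasurableSet.iUnion measurableSet_qAdicLevel

/-- Prepending the digit `d` to an expansion maps `qAdicLevel q n` onto the points of
`qAdicLevel q (n + 1)` that are not already in `qAdicLevel q 1`. -/
theorem div_mem_qAdicLevel_succ_iff {d : ℕ} (hd : d < q) {y : ℝ} (hy : y ∈ Icc 0 1) (n : ℕ) :
    (d + y) / q ∈ qAdicLevel q (n + 1) \ qAdicLevel q 1 ↔ y ∈ qAdicLevel q n := by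
  have hq : (0 : ℝ) < q := by exact_mod_cast (Nat.zero_lt_of_lt hd)
  have hdq : (d : ℝ) + 1 ≤ q := by exact_mod_cast hd
  have h1 : (q : ℝ) ^ 1 * ((d + y) / q) = d + y := by field_simp
  have hn : (q : ℝ) ^ (n + 1) * ((d + y) / q) = q ^ n * d + q ^ n * y := by field_simp; ring
  simp only [qAdicLevel, Set.mem_sdiff, mem_ofPred_eq, mem_Ioo, h1, hn,
    div_pos_iff_of_pos_right hq, div_lt_one hq, not_and, not_exists]
  constructor
  · rintro ⟨⟨_, k, hk⟩, hnot⟩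
    refine ⟨⟨lt_of_le_of_ne hy.1 fun h => ?_, lt_of_le_of_ne hy.2 fun h => ?_⟩,
      k - (q : ℤ) ^ n * d, by push_cast; linarith⟩
    · exact hnot ⟨by linarith, by linarith⟩ d (by simp [← h])
    · exact hnot ⟨by linarith, by linarith⟩ (d + 1) (by rw [h]; push_cast; ring)
  · rintro ⟨⟨hy0, hy1⟩, k, hk⟩
    refine ⟨⟨⟨by linarith, by linarith⟩, (q : ℤ) ^ n * d + k, by push_cast; linarith⟩,
      fun _ m hm => ?_⟩
    have h1 : (d : ℤ) < m := by exact_mod_cast (show (d : ℝ) < m by linarith)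
    have h2 : m < (d : ℤ) + 1 := by exact_mod_cast (show (m : ℝ) < d + 1 by linarith)
    omega

theorem div_mem_qAdicLevel_one {d : ℕ} (h0 : 0 < d) (hd : d < q) :
    (d : ℝ) / q ∈ qAdicLevel q 1 := by
  have hq : (0 : ℝ) < q := by exact_mod_cast (Nat.zero_lt_of_lt hd)
  exact ⟨⟨by positivity, (div_lt_one hq).2 (by exact_mod_cast hd)⟩, d,
    by rw [pow_one, mul_div_cancel₀ _ hq.ne', Int.cast_natCast]⟩

theorem ofDigits_mem_qAdicLevel_one_of_head_lt {s t : ℕ → Fin q} (hlt : s 0 < t 0)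
    (h : ofDigits s = ofDigits t) : ofDigits t ∈ qAdicLevel q 1 := by
  have hq : (0 : ℝ) < q := by exact_mod_cast (s 0).pos
  have hgap : ((s 0 : ℕ) : ℝ) + 1 ≤ (t 0 : ℕ) := by exact_mod_cast hlt
  have := ofDigits_le_one (shift s)
  have := ofDigits_nonneg (shift t)
  rw [ofDigits_eq_div s, ofDigits_eq_div t, div_left_inj' hq.ne'] at h
  have htail : ofDigits (shift t) = 0 := by linarith
  rw [ofDigits_eq_div t, htail, add_zero]
  exact div_mem_qAdicLevel_one (Nat.zero_lt_of_lt hlt) (t 0).isLt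

theorem ofDigits_mem_qAdic_of_ne {s t : ℕ → Fin q} {n : ℕ} (hn : s n ≠ t n)
    (h : ofDigits s = ofDigits t) : ofDigits s ∈ qAdic q := by
  have hq : (0 : ℝ) < q := by exact_mod_cast (s 0).pos
  by_cases h0 : s 0 = t 0
  · cases n with
    | zero => exact absurd h0 hn
    | succ n =>
      rw [ofDigits_eq_div s, ofDigits_eq_div t, h0, div_left_inj' hq.ne', add_right_inj] at h
      obtain ⟨m, hm⟩ :=
        mem_iUnion.1 (ofDigits_mem_qAdic_of_ne (s := shift s) (t := shift t) hn h)
      refine mem_iUnion_of_mem (m + 1) ?_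
      rw [ofDigits_eq_div s]
      exact ((div_mem_qAdicLevel_succ_iff (s 0).isLt
        ⟨ofDigits_nonneg _, ofDigits_le_one _⟩ m).2 hm).1
  · refine mem_iUnion_of_mem 1 ?_
    rcases lt_or_gt_of_ne h0 with hlt | hlt
    · exact h ▸ ofDigits_mem_qAdicLevel_one_of_head_lt hlt h
    · exact ofDigits_mem_qAdicLevel_one_of_head_lt hlt h.symm

theorem qAdic_subset_Ioo : qAdic q ⊆ Ioo 0 1 := iUnion_subset fun _ _ hx => hx.1

theorem mem_qAdic_iff (hq : 0 < q) {x : ℝ} :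
    x ∈ qAdic q ↔ ∃ n k : ℕ, 1 ≤ n ∧ 0 < k ∧ k < q ^ n ∧ x = k / q ^ n := by
  have hqn : ∀ n : ℕ, (0 : ℝ) < (q : ℝ) ^ n := fun n => by positivity
  constructor
  · intro hx
    obtain ⟨n, ⟨hx0, hx1⟩, k, hk⟩ := mem_iUnion.1 hx
    have hn : n ≠ 0 := by
      rintro rfl
      exact (qAdicLevel_zero (q := q)).subset ⟨⟨hx0, hx1⟩, k, hk⟩
    have hk0 : (0 : ℝ) < k := hk ▸ mul_pos (hqn n) hx0
    have hkq : (k : ℝ) < (q : ℝ) ^ n := hk ▸ mul_lt_of_lt_one_right (hqn n) hx1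
    lift k to ℕ using (by exact_mod_cast hk0.le)
    push_cast at hk hk0 hkq
    exact ⟨n, k, Nat.one_le_iff_ne_zero.2 hn, by exact_mod_cast hk0, by exact_mod_cast hkq,
      by rw [← hk]; field_simp⟩
  · rintro ⟨n, k, -, hk0, hkq, rfl⟩
    refine mem_iUnion_of_mem n ⟨⟨by positivity, (div_lt_one (hqn n)).2 (by exact_mod_cast hkq)⟩,
      k, by field_simp; push_cast; ring⟩

theorem exists_seq_qAdic_tendsto_nhdsLT_one (hq : 1 < q) :
    ∃ u : ℕ → ℝ, (∀ j, u j ∈ qAdic q) ∧ Tendsto u atTop (𝓝[<] 1) := by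
  have hq0 : (0 : ℝ) < q := by exact_mod_cast Nat.zero_lt_of_lt hq
  have hr0 : (0 : ℝ) < (q : ℝ)⁻¹ := inv_pos.2 hq0
  have hr1 : (q : ℝ)⁻¹ < 1 := inv_lt_one_of_one_lt₀ (by exact_mod_cast hq)
  have hpow : ∀ j : ℕ, (0 : ℝ) < (q : ℝ)⁻¹ ^ (j + 1) ∧ (q : ℝ)⁻¹ ^ (j + 1) < 1 :=
    fun j => ⟨pow_pos hr0 _, pow_lt_one₀ hr0.le hr1 (Nat.succ_ne_zero j)⟩
  refine ⟨fun j => 1 - (q : ℝ)⁻¹ ^ (j + 1), fun j => mem_iUnion_of_mem (j + 1) ⟨?_, ?_⟩, ?_⟩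
  · constructor <;> linarith [hpow j]
  · refine ⟨(q : ℤ) ^ (j + 1) - 1, ?_⟩
    rw [mul_sub, ← mul_pow, mul_inv_cancel₀ hq0.ne']
    push_cast
    ring
  · refine tendsto_nhdsWithin_iff.2
      ⟨?_, Eventually.of_forall fun j => mem_Iio.2 (by linarith [hpow j])⟩
    have := (tendsto_pow_atTop_nhds_zero_of_lt_one hr0.le hr1).comp (tendsto_add_atTop_nat 1)
    simpa using (tendsto_const_nhds (x := (1 : ℝ))).sub this

theorem exists_seq_qAdic_or_one_le_tendsto_nhdsGE (hq : 1 < q) {x : ℝ} (hx0 : 0 ≤ x) :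
    ∃ u : ℕ → ℝ, (∀ j, u j ∈ qAdic q ∨ 1 ≤ u j) ∧ Tendsto u atTop (𝓝[≥] x) := by
  have hqn : ∀ j : ℕ, (0 : ℝ) < (q : ℝ) ^ j := fun j => pow_pos (by positivity) j
  have hr0 : (0 : ℝ) ≤ (q : ℝ)⁻¹ := by positivity
  have hr1 : (q : ℝ)⁻¹ < 1 := inv_lt_one_of_one_lt₀ (by exact_mod_cast hq)
  set u : ℕ → ℝ := fun j => (⌊(q : ℝ) ^ j * x⌋₊ + 1) / (q : ℝ) ^ j
  have hxu : ∀ j, x < u j := fun j => by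
    rw [lt_div_iff₀ (hqn j), mul_comm]
    exact Nat.lt_floor_add_one _
  have hux : ∀ j, u j ≤ x + (q : ℝ)⁻¹ ^ j := fun j => by
    rw [div_le_iff₀ (hqn j), add_mul, inv_pow, inv_mul_cancel₀ (hqn j).ne', mul_comm x]
    linarith [Nat.floor_le (mul_nonneg (hqn j).le hx0)]
  refine ⟨u, fun j => ?_,
    tendsto_nhdsWithin_iff.2 ⟨?_, Eventually.of_forall fun j => (hxu j).le⟩⟩
  · rcases lt_or_ge (u j) 1 with h | h
    · refine Or.inl (mem_iUnion_of_mem j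
        ⟨⟨hx0.trans_lt (hxu j), h⟩, ⌊(q : ℝ) ^ j * x⌋₊ + 1, ?_⟩)
      simp only [u]
      field_simp
      push_cast
      ring
    · exact Or.inr h
  · refine tendsto_of_tendsto_of_tendsto_of_le_of_le tendsto_const_nhds ?_
      (fun j => (hxu j).le) hux
    simpa using (tendsto_const_nhds (x := x)).add
      (tendsto_pow_atTop_nhds_zero_of_lt_one hr0 hr1)

theorem measurable_shift {α : Type*} [MeasurableSpace α] :
    Measurable (shift : (ℕ → α) → ℕ → α) :=
  measurable_pi_lambda _ fun n => measurable_pi_apply (n + 1)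

theorem measurable_ofDigits : Measurable (ofDigits : (ℕ → Fin q) → ℝ) :=
  continuous_ofDigits.measurable

section Measure

variable (μ : Measure (ℕ → Fin q)) [IsProbabilityMeasure μ]

instance : IsProbabilityMeasure (μ.map ofDigits) :=
  Measure.isProbabilityMeasure_map measurable_ofDigits.aemeasurable

instance : IsProbabilityMeasure (μ.map shift) :=
  Measure.isProbabilityMeasure_map measurable_shift.aemeasurable

theorem cdf_map_ofDigits (x : ℝ) : cdf (μ.map ofDigits) x = μ.real (ofDigits ⁻¹' Iic x) := by
  rw [cdf_eq_real, map_measureReal_apply measurable_ofDigits measurableSet_Iic]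

theorem cdf_map_ofDigits_of_neg {x : ℝ} (hx : x < 0) : cdf (μ.map ofDigits) x = 0 := by
  have : ofDigits (b := q) ⁻¹' Iic x = ∅ :=
    eq_empty_of_forall_notMem fun s hs => (ofDigits_nonneg s).not_gt (lt_of_le_of_lt hs hx)
  rw [cdf_map_ofDigits, this, measureReal_empty]

theorem cdf_map_ofDigits_of_one_le {x : ℝ} (hx : 1 ≤ x) : cdf (μ.map ofDigits) x = 1 := by
  have : ofDigits (b := q) ⁻¹' Iic x = univ :=
    eq_univ_of_forall fun s => (ofDigits_le_one s).trans hx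
  rw [cdf_map_ofDigits, this, probReal_univ]

theorem cdf_map_ofDigits_div {x : ℝ} (hx0 : 0 ≤ x) (hx1 : x < 1) (j : ℕ) :
    cdf (μ.map ofDigits) ((x + j) / q) = μ.real {s | (s 0 : ℕ) < j}
      + μ.real {s | (s 0 : ℕ) = j ∧ ofDigits (shift s) ≤ x} := by
  have hset : ofDigits ⁻¹' Iic ((x + j) / q) = {s : ℕ → Fin q | (s 0 : ℕ) < j}
      ∪ {s | (s 0 : ℕ) = j ∧ ofDigits (shift s) ≤ x} := by
    ext s
    exact ofDigits_le_div_iff s hx0 hx1 j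
  rw [cdf_map_ofDigits, hset, measureReal_union]
  · exact disjoint_left.2 fun s h1 h2 => (ne_of_lt h1) h2.1
  · exact (measurableSet_eq_fun (by fun_prop) measurable_const).inter
      (measurableSet_le (measurable_ofDigits.comp measurable_shift) measurable_const)

theorem sum_cdf_sub_cdf {x : ℝ} (hx0 : 0 ≤ x) (hx1 : x < 1) :
    ∑ j ∈ Finset.range q, (cdf (μ.map ofDigits) ((x + j) / q) - cdf (μ.map ofDigits) (j / q))
      = cdf ((μ.map shift).map ofDigits) x - cdf ((μ.map shift).map ofDigits) 0 := by
  have hsum : ∀ y, ∑ j ∈ Finset.range q, μ.real {s | (s 0 : ℕ) = j ∧ ofDigits (shift s) ≤ y}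
      = cdf ((μ.map shift).map ofDigits) y := by
    intro y
    have hU : ⋃ j ∈ Finset.range q, {s : ℕ → Fin q | (s 0 : ℕ) = j ∧ ofDigits (shift s) ≤ y}
        = shift ⁻¹' (ofDigits ⁻¹' Iic y) := by
      ext s
      simp only [mem_iUnion, mem_ofPred_eq, mem_preimage, mem_Iic, Finset.mem_range]
      exact ⟨fun ⟨_, _, _, h⟩ => h, fun h => ⟨_, (s 0).isLt, rfl, h⟩⟩
    rw [cdf_map_ofDigits,
      map_measureReal_apply measurable_shift (measurable_ofDigits measurableSet_Iic),
      ← measureReal_biUnion_finset, hU]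
    · intro i _ j _ hij
      exact disjoint_left.2 fun s h1 h2 => hij (h1.1.symm.trans h2.1)
    · exact fun j _ => (measurableSet_eq_fun (by fun_prop) measurable_const).inter
        (measurableSet_le (measurable_ofDigits.comp measurable_shift) measurable_const)
  have hzero : ∀ j : ℕ, (j : ℝ) / q = (0 + j) / q := fun j => by rw [zero_add]
  simp only [hzero, cdf_map_ofDigits_div μ hx0 hx1, cdf_map_ofDigits_div μ le_rfl one_pos,
    add_sub_add_left_eq_sub, Finset.sum_sub_distrib, hsum]

theorem measureReal_map_ofDigits_le_map_shift {S : Set ℝ} (hS : MeasurableSet S)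
    (h : ∀ s : ℕ → Fin q, ofDigits s ∈ S → ofDigits (shift s) ∈ S) :
    (μ.map ofDigits).real S ≤ ((μ.map shift).map ofDigits).real S := by
  rw [map_measureReal_apply measurable_ofDigits hS, map_measureReal_apply measurable_ofDigits hS,
    map_measureReal_apply measurable_shift (measurable_ofDigits hS)]
  exact measureReal_mono fun s => h s

theorem cdf_map_shift_zero_eq (hq : 1 < q)
    (h : ∀ x ∈ qAdic q, cdf (μ.map ofDigits) x - cdf (μ.map ofDigits) 0
      = cdf ((μ.map shift).map ofDigits) x - cdf ((μ.map shift).map ofDigits) 0) :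
    cdf ((μ.map shift).map ofDigits) 0 = cdf (μ.map ofDigits) 0 := by
  obtain ⟨u, hu, hlim⟩ := exists_seq_qAdic_tendsto_nhdsLT_one hq
  have hlimit : ∀ ρ : Measure ℝ,
      Tendsto (fun j => cdf ρ (u j)) atTop (𝓝 (Function.leftLim (cdf ρ) 1)) :=
    fun ρ => ((monotone_cdf ρ).tendsto_leftLim 1).comp hlim
  have hjump : ∀ (ρ : Measure (ℕ → Fin q)) [IsProbabilityMeasure ρ],
      Function.leftLim (cdf (ρ.map ofDigits)) 1 = 1 - (ρ.map ofDigits).real {1} := by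
    intro ρ _
    rw [← cdf_sub_leftLim_cdf, cdf_map_ofDigits_of_one_le _ le_rfl]
    ring
  have hlim_eq := tendsto_nhds_unique ((hlimit _).sub_const _)
    (((hlimit _).sub_const _).congr fun j => (h _ (hu j)).symm)
  have h0 : cdf (μ.map ofDigits) 0 ≤ cdf ((μ.map shift).map ofDigits) 0 := by
    simp only [cdf_eq_real]
    exact measureReal_map_ofDigits_le_map_shift μ measurableSet_Iic
      fun s => ofDigits_shift_nonpos s
  have h1 : (μ.map ofDigits).real {1} ≤ ((μ.map shift).map ofDigits).real {1} :=
    measureReal_map_ofDigits_le_map_shift μ (measurableSet_singleton 1)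
      fun s => ofDigits_shift_eq_one s
  rw [hjump, hjump] at hlim_eq
  linarith

theorem map_shift_map_ofDigits_eq (hq : 1 < q)
    (h : ∀ x ∈ qAdic q, cdf (μ.map ofDigits) x - cdf (μ.map ofDigits) 0
      = cdf ((μ.map shift).map ofDigits) x - cdf ((μ.map shift).map ofDigits) 0) :
    (μ.map shift).map ofDigits = μ.map ofDigits := by
  have h0 := cdf_map_shift_zero_eq μ hq h
  have hgood : ∀ y, y ∈ qAdic q ∨ 1 ≤ y →
      cdf ((μ.map shift).map ofDigits) y = cdf (μ.map ofDigits) y := by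
    rintro y (hy | hy)
    · linarith [h y hy]
    · rw [cdf_map_ofDigits_of_one_le _ hy, cdf_map_ofDigits_of_one_le _ hy]
  refine Measure.eq_of_cdf _ _ (StieltjesFunction.ext fun x => ?_)
  rcases lt_or_ge x 0 with hx | hx
  · rw [cdf_map_ofDigits_of_neg _ hx, cdf_map_ofDigits_of_neg _ hx]
  obtain ⟨u, hu, hlim⟩ := exists_seq_qAdic_or_one_le_tendsto_nhdsGE hq hx
  have hright : ∀ ρ : Measure ℝ, Tendsto (fun j => cdf ρ (u j)) atTop (𝓝 (cdf ρ x)) :=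
    fun ρ => ((cdf ρ).right_continuous x).tendsto.comp hlim
  exact tendsto_nhds_unique (hright _) ((hright _).congr fun j => (hgood _ (hu j)).symm)

theorem measure_ofDigits_preimage_qAdic_eq_zero
    (hlaw : (μ.map shift).map ofDigits = μ.map ofDigits) :
    μ (ofDigits ⁻¹' qAdic q) = 0 := by
  set c : ℕ → ℝ≥0∞ := fun n => μ (ofDigits ⁻¹' qAdicLevel q n)
  have hmeas : ∀ n, MeasurableSet (ofDigits (b := q) ⁻¹' qAdicLevel q n) :=
    fun n => measurable_ofDigits (measurableSet_qAdicLevel n)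
  have hstep : ∀ n, c (n + 1) = c n + c 1 := by
    intro n
    have hpre : shift ⁻¹' (ofDigits (b := q) ⁻¹' qAdicLevel q n)
        = ofDigits ⁻¹' qAdicLevel q (n + 1) \ ofDigits ⁻¹' qAdicLevel q 1 := by
      ext s
      rw [mem_preimage, mem_preimage, ← preimage_sdiff, mem_preimage, ofDigits_eq_div s,
        div_mem_qAdicLevel_succ_iff (s 0).isLt ⟨ofDigits_nonneg _, ofDigits_le_one _⟩]
    have hshift : μ (shift ⁻¹' (ofDigits ⁻¹' qAdicLevel q n)) = c n := by
      rw [← Measure.map_apply measurable_shift (hmeas n),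
        ← Measure.map_apply measurable_ofDigits (measurableSet_qAdicLevel n), hlaw,
        Measure.map_apply measurable_ofDigits (measurableSet_qAdicLevel n)]
    have := measure_sdiff_add_inter (μ := μ) (ofDigits ⁻¹' qAdicLevel q (n + 1)) (hmeas 1)
    rw [inter_eq_right.2 (preimage_mono (qAdicLevel_one_subset n)), ← hpre, hshift] at this
    exact this.symm
  have hlin : ∀ n : ℕ, c n = n * c 1 := by
    intro n
    induction n with
    | zero => simp [c, qAdicLevel_zero]
    | succ n ih => rw [hstep, ih]; push_cast; ring
  have hc1 : c 1 = 0 := by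
    by_contra hne
    obtain ⟨n, hn⟩ := ENNReal.exists_nat_mul_gt hne ENNReal.one_ne_top
    exact (hlin n ▸ hn).not_ge prob_le_one
  rw [qAdic, preimage_iUnion]
  exact measure_iUnion_null fun n => show c n = 0 by rw [hlin, hc1, mul_zero]

theorem map_shift_eq_self_iff (hq : 1 < q) :
    μ.map shift = μ ↔ ∀ x ∈ qAdic q, cdf (μ.map ofDigits) x = cdf (μ.map ofDigits) 0
      + ∑ j ∈ Finset.range q,
        (cdf (μ.map ofDigits) ((x + j) / q) - cdf (μ.map ofDigits) (j / q)) := by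
  have hcdf : ∀ x ∈ qAdic q, (cdf (μ.map ofDigits) x = cdf (μ.map ofDigits) 0
      + ∑ j ∈ Finset.range q, (cdf (μ.map ofDigits) ((x + j) / q) - cdf (μ.map ofDigits) (j / q))
      ↔ cdf (μ.map ofDigits) x - cdf (μ.map ofDigits) 0
        = cdf ((μ.map shift).map ofDigits) x - cdf ((μ.map shift).map ofDigits) 0) := by
    intro x hx
    rw [sum_cdf_sub_cdf μ (qAdic_subset_Ioo hx).1.le (qAdic_subset_Ioo hx).2]
    constructor <;> intro h <;> linarith
  refine ⟨fun hstat x hx => (hcdf x hx).2 (by rw [hstat]), fun h => ?_⟩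
  have hlaw := map_shift_map_ofDigits_eq μ hq fun x hx => (hcdf x hx).1 (h x hx)
  have hnull := measure_ofDigits_preimage_qAdic_eq_zero μ hlaw
  refine Measure.eq_of_map_eq_of_fiber_trivial continuous_ofDigits (fun s hs t hts => ?_) hlaw
    ?_ hnull
  · by_contra hne
    obtain ⟨n, hn⟩ := Function.ne_iff.1 hne
    exact hs (by rw [mem_preimage, ← hts]; exact ofDigits_mem_qAdic_of_ne hn hts)
  · rwa [← Measure.map_apply measurable_ofDigits measurableSet_qAdic, hlaw,
      Measure.map_apply measurable_ofDigits measurableSet_qAdic]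

end Measure

theorem map_coe_injective [NeZero q] :
    Function.Injective (Measure.map fun (s : ℕ → Fin q) n => (s n : ℕ)) := by
  intro μ ν h
  have hval : Measurable fun (s : ℕ → Fin q) n => (s n : ℕ) := by fun_prop
  have hofNat : Measurable fun (t : ℕ → ℕ) n => Fin.ofNat q (t n) := by fun_prop
  have := congrArg (Measure.map fun (t : ℕ → ℕ) n => Fin.ofNat q (t n)) h
  simpa only [Measure.map_map hofNat hval, Function.comp_def, Fin.ofNat_val_eq_self,
    Measure.map_id'] using this

end QAdicDigits

/-- Stationarity of the digit process is equivalent to the stationarity functional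
equation for the CDF of `X = Σ Xₙ q^{-n}` at all base-`q` fractions. -/
theorem stmt_2 {Ω : Type*} [MeasurableSpace Ω] (P : Measure Ω) [IsProbabilityMeasure P]
    (q : ℕ) (hq : 2 ≤ q) (X : ℕ → Ω → ℕ)
    (hmeas : ∀ n, Measurable (X n)) (hval : ∀ n ω, X n ω < q)
    (Y : Ω → ℝ) (hY : ∀ ω, Y ω = ∑' n : ℕ, (X n ω : ℝ) / (q : ℝ) ^ (n + 1))
    (F : ℝ → ℝ) (hF : ∀ x, F x = (P {ω | Y ω ≤ x}).toReal) :
    (Measure.map (fun ω => fun n => X (n + 1) ω) P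
        = Measure.map (fun ω => fun n => X n ω) P)
      ↔ (∀ x : ℝ, (∃ n k : ℕ, 1 ≤ n ∧ 0 < k ∧ k < q ^ n ∧ x = (k : ℝ) / (q : ℝ) ^ n) →
          F x = F 0 + ∑ j ∈ Finset.range q, (F ((x + j) / q) - F ((j : ℝ) / q))) := by
  have : NeZero q := ⟨by omega⟩
  set D : Ω → ℕ → Fin q := fun ω n => ⟨X n ω, hval n ω⟩
  have hD : Measurable D := measurable_pi_lambda _ fun n =>
    measurable_to_countable' fun k => by
      convert hmeas n (measurableSet_singleton (k : ℕ)) using 1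
      ext ω
      simp [D, Fin.ext_iff]
  have hcoe : Measurable fun (s : ℕ → Fin q) n => (s n : ℕ) := by fun_prop
  set μ := P.map D
  have hμ : IsProbabilityMeasure μ := Measure.isProbabilityMeasure_map hD.aemeasurable
  obtain rfl : F = cdf (μ.map Real.ofDigits) := funext fun x => by
    rw [hF, ← measureReal_def, QAdicDigits.cdf_map_ofDigits,
      map_measureReal_apply hD (QAdicDigits.measurable_ofDigits measurableSet_Iic)]
    congr 1
    ext ω
    simp [hY, D, Real.ofDigits, Real.ofDigitsTerm, div_eq_mul_inv]
  have hstat : Measure.map (fun ω n => X (n + 1) ω) P = Measure.map (fun ω n => X n ω) P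
      ↔ μ.map QAdicDigits.shift = μ := by
    rw [← QAdicDigits.map_coe_injective.eq_iff, Measure.map_map hcoe hD,
      Measure.map_map hcoe QAdicDigits.measurable_shift,
      Measure.map_map (hcoe.comp QAdicDigits.measurable_shift) hD]
    rfl
  rw [hstat, QAdicDigits.map_shift_eq_self_iff μ (by omega)]
  simp only [QAdicDigits.mem_qAdic_iff (show 0 < q by omega)]
end

section
/- Let q ≥ 2 be an integer and f ∈ L¹([0,1]) (complex-valued) satisfy f(x) = (1/q) Σ_{j=0}^{q-1} f((x+j)/q) for almost all x ∈ [0,1] with respect to Lebesgue measure. Then f is almost everywhere equal to the constant ∫₀¹ f(x) dx. -/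
/-!
Let `c n` be the Fourier coefficients of `f` on `[0, 1]`. Substituting `y = (x + j) / q` in the
functional equation gives `c n = c (q * n)`, hence `c n = c (q ^ k * n)` for every `k`, and the
Riemann–Lebesgue lemma forces `c n = 0` for `n ≠ 0`. It remains to see that an integrable
function whose nonconstant Fourier coefficients vanish is a.e. equal to its mean. Subtracting the
mean, all coefficients vanish; by Fubini so do the nonconstant ones of the primitive, which is
continuous and periodic, so its Fourier series is trivially summable and the primitive is
constant, i.e. zero. Lebesgue's differentiation theorem then shows that the function itself
vanishes a.e.
-/

open MeasureTheory Filter Set Complex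
open scoped Real Topology

theorem IntervalIntegrable.comp_div_add {E : Type*} [NormedAddCommGroup E] {g : ℝ → E}
    {a b c : ℝ} (hc : c ≠ 0) (d : ℝ)
    (hg : IntervalIntegrable g volume (a / c + d) (b / c + d)) :
    IntervalIntegrable (fun x => g (x / c + d)) volume a b := by
  have := (hg.comp_add_right d).comp_mul_left (c := c⁻¹)
  simp only [add_sub_cancel_right, div_inv_eq_mul, div_mul_cancel₀ _ hc] at this
  simpa only [div_eq_inv_mul] using this

theorem intervalIntegral_mul_primitive {a b : ℝ} (hab : a ≤ b) {g h : ℝ → ℂ}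
    (hg : IntervalIntegrable g volume a b) (hh : IntervalIntegrable h volume a b) :
    ∫ x in a..b, g x * ∫ t in a..x, h t = ∫ t in a..b, (∫ x in t..b, g x) * h t := by
  rw [intervalIntegrable_iff_integrableOn_Ioc_of_le hab] at hg hh
  set μ := volume.restrict (Ioc a b)
  set K : ℝ → ℝ → ℂ := fun x t =>
    {p : ℝ × ℝ | p.2 ≤ p.1}.indicator (fun p => g p.1 * h p.2) (x, t)
  have hK : Integrable (Function.uncurry K) (μ.prod μ) :=
    (hg.mul_prod hh).indicator (measurableSet_le measurable_snd measurable_fst)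
  have hleft : ∀ x ∈ Ioc a b, ∫ t, K x t ∂μ = g x * ∫ t in a..x, h t := by
    intro x hx
    have hK_x : K x = (Iic x).indicator fun t => g x * h t := by
      ext t; by_cases ht : t ≤ x <;> simp [K, ht]
    rw [hK_x, integral_indicator measurableSet_Iic, Measure.restrict_restrict measurableSet_Iic,
      Iic_inter_Ioc_of_le hx.2, integral_const_mul, intervalIntegral.integral_of_le hx.1.le]
  have hright : ∀ t ∈ Ioc a b, ∫ x, K x t ∂μ = (∫ x in t..b, g x) * h t := by
    intro t ht
    have hK_t : (fun x => K x t) = (Ici t).indicator fun x => g x * h t := by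
      ext x; by_cases hx : t ≤ x <;> simp [K, hx]
    have hset : Ici t ∩ Ioc a b = Icc t b := by
      ext x
      simp only [mem_inter_iff, mem_Ici, mem_Ioc, mem_Icc]
      exact ⟨fun ⟨htx, _, hxb⟩ => ⟨htx, hxb⟩,
        fun ⟨htx, hxb⟩ => ⟨htx, ht.1.trans_le htx, hxb⟩⟩
    rw [hK_t, integral_indicator measurableSet_Ici, Measure.restrict_restrict measurableSet_Ici,
      hset, integral_Icc_eq_integral_Ioc, integral_mul_const,
      intervalIntegral.integral_of_le ht.2]
  rw [intervalIntegral.integral_of_le hab, intervalIntegral.integral_of_le hab,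
    ← setIntegral_congr_fun measurableSet_Ioc hleft,
    ← setIntegral_congr_fun measurableSet_Ioc hright]
  exact integral_integral_swap hK

theorem ae_eq_zero_of_forall_intervalIntegral_eq_zero {E : Type*} [NormedAddCommGroup E]
    [NormedSpace ℝ E] [CompleteSpace E] {a b : ℝ} {h : ℝ → E}
    (hh : IntervalIntegrable h volume a b) (h0 : ∀ x ∈ Icc a b, ∫ t in a..x, h t = 0) :
    ∀ᵐ x ∂volume.restrict (Icc a b), h x = 0 := by
  have hne : ∀ c : ℝ, ∀ᵐ x ∂volume, x ≠ c := fun c => by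
    simp [ae_iff, measure_singleton]
  rw [ae_restrict_iff' measurableSet_Icc]
  filter_upwards [hh.ae_hasDerivAt_integral, hne a, hne b] with x hderiv hxa hxb hx
  have hx' : x ∈ Ioo a b := ⟨hx.1.lt_of_ne' hxa, hx.2.lt_of_ne hxb⟩
  have hzero : (fun y => ∫ t in a..y, h t) =ᶠ[𝓝 x] fun _ => 0 :=
    eventually_of_mem (Icc_mem_nhds hx'.1 hx'.2) h0
  exact (hderiv (Icc_subset_uIcc hx) a left_mem_uIcc).unique
    ((hasDerivAt_const x 0).congr_of_eventuallyEq hzero)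

theorem eq_fourierCoeff_zero_of_fourierCoeff_eq_zero {T : ℝ} [Fact (0 < T)]
    (f : C(AddCircle T, ℂ)) (hf : ∀ n ≠ 0, fourierCoeff f n = 0) (x : AddCircle T) :
    f x = fourierCoeff f 0 := by
  have hsummable : Summable (fourierCoeff f) := (hasSum_single 0 hf).summable
  have hsingle : HasSum (fun n => fourierCoeff f n • fourier n x) (fourierCoeff f 0) := by
    have := hasSum_single (f := fun n => fourierCoeff f n • fourier n x) 0
      fun n hn => by rw [hf n hn, zero_smul]
    rwa [fourier_zero, smul_eq_mul, mul_one] at this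
  exact (has_pointwise_sum_fourier_series_of_summable hsummable x).unique hsingle

section Interval

variable {a b : ℝ} (hab : a < b)

theorem fourierCoeffOn_sub {f g : ℝ → ℂ} (hf : IntervalIntegrable f volume a b)
    (hg : IntervalIntegrable g volume a b) (n : ℤ) :
    fourierCoeffOn hab (fun x => f x - g x) n =
      fourierCoeffOn hab f n - fourierCoeffOn hab g n := by
  have he : ContinuousOn (fun x : ℝ => fourier (-n) (x : AddCircle (b - a))) (uIcc a b) :=
    ((map_continuous _).comp (AddCircle.continuous_mk' _)).continuousOn
  simp only [fourierCoeffOn_eq_integral, smul_eq_mul, mul_sub, ← smul_sub,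
    intervalIntegral.integral_sub (hf.continuousOn_mul he) (hg.continuousOn_mul he)]

theorem fourierCoeffOn_const (c : ℂ) (n : ℤ) :
    fourierCoeffOn hab (fun _ => c) n = if n = 0 then c else 0 := by
  have : Fact (0 < b - a) := ⟨sub_pos.2 hab⟩
  change fourierCoeff (fun _ : AddCircle (b - a) => c) n = _
  have hc : (fun _ : AddCircle (b - a) => c) = fun x => c * fourier 0 x := by
    ext x; rw [fourier_zero, mul_one]
  rw [hc, fourierCoeff.const_mul, fourierCoeff_fourier]
  split_ifs with hn <;> simp [hn]

theorem tendsto_fourierCoeffOn_cofinite {E : Type*} [NormedAddCommGroup E] [NormedSpace ℂ E]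
    (f : ℝ → E) :
    Tendsto (fourierCoeffOn hab f) cofinite (𝓝 0) := by
  have hT : (b - a) ≠ 0 := (sub_pos.2 hab).ne'
  have hcoeff : ∀ n : ℤ, fourierCoeffOn hab f n = (1 / (b - a)) •
      ∫ v, Real.fourierChar (-(v * (n * (b - a)⁻¹))) • (Ioc a b).indicator f v := by
    intro n
    rw [fourierCoeffOn_eq_integral, intervalIntegral.integral_of_le hab.le,
      ← integral_indicator measurableSet_Ioc]
    congr 1
    refine integral_congr_ae (ae_of_all _ fun v => ?_)
    by_cases hv : v ∈ Ioc a b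
    · simp only [indicator_of_mem hv, Circle.smul_def, Real.fourierChar_apply, fourier_coe_apply]
      congr 2
      push_cast
      field_simp
    · simp [indicator_of_notMem hv]
  have hfreq : Tendsto (fun n : ℤ => (n : ℝ) * (b - a)⁻¹) cofinite (cocompact ℝ) :=
    (tendsto_cocompact_mul_right₀ (inv_ne_zero hT)).comp Int.tendsto_coe_cofinite
  have := ((Real.tendsto_integral_exp_smul_cocompact ((Ioc a b).indicator f)).comp
    hfreq).const_smul (1 / (b - a))
  rw [smul_zero] at this
  exact this.congr fun n => (hcoeff n).symm

/-- The analogue of `fourierCoeffOn_of_hasDerivAt` for a primitive, which need not be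
differentiable. -/
theorem fourierCoeffOn_primitive {h : ℝ → ℂ} (hh : IntervalIntegrable h volume a b) {n : ℤ}
    (hn : n ≠ 0) :
    fourierCoeffOn hab (fun x => ∫ t in a..x, h t) n = 1 / (-2 * π * I * n) *
      (fourier (-n) (a : AddCircle (b - a)) * (∫ t in a..b, h t) -
        (b - a) * fourierCoeffOn hab h n) := by
  have hT : Fact (0 < b - a) := ⟨sub_pos.2 hab⟩
  set e : ℝ → ℂ := fun x => fourier (-n) (x : AddCircle (b - a))
  set c : ℂ := ((b - a : ℝ) : ℂ) / (-2 * π * I * n)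
  have he : Continuous e := (map_continuous _).comp (AddCircle.continuous_mk' _)
  have hperiod : e b = e a := by
    simp only [e]
    congr 1
    simpa using AddCircle.coe_add_period (b - a) a
  have hint_e : ∀ t, ∫ x in t..b, e x = c * (e a - e t) := fun t => by
    rw [intervalIntegral.integral_eq_sub_of_hasDerivAt
      (fun x _ => has_antideriv_at_fourier_neg hT hn x) (he.intervalIntegrable _ _), ← hperiod,
      mul_sub]
  have hehint : IntervalIntegrable (fun t => e t * h t) volume a b :=
    hh.continuousOn_mul he.continuousOn
  rw [fourierCoeffOn_eq_integral, fourierCoeffOn_eq_integral]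
  simp only [smul_eq_mul]
  rw [intervalIntegral_mul_primitive hab.le (he.intervalIntegrable _ _) hh]
  simp only [hint_e, mul_assoc, sub_mul]
  rw [intervalIntegral.integral_const_mul, intervalIntegral.integral_sub (hh.const_mul _) hehint,
    intervalIntegral.integral_const_mul]
  have hT' : (b : ℂ) - a ≠ 0 := by exact_mod_cast hT.out.ne'
  simp only [c, e, Complex.real_smul]
  push_cast
  field_simp

theorem eqOn_of_fourierCoeffOn_eq_zero {F : ℝ → ℂ}
    (hF : ContinuousOn F (Icc a b)) (hFab : F a = F b)
    (hc : ∀ n ≠ 0, fourierCoeffOn hab F n = 0) : ∀ x ∈ Icc a b, F x = F a := by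
  have : Fact (0 < b - a) := ⟨sub_pos.2 hab⟩
  have hb : a + (b - a) = b := add_sub_cancel a b
  let G : C(AddCircle (b - a), ℂ) :=
    ⟨AddCircle.liftIoc (b - a) a F, AddCircle.liftIoc_continuous (by rwa [hb]) (by rwa [hb])⟩
  have hG : ∀ x ∈ Ioc a b, F x = fourierCoeffOn hab F 0 := fun x hx => by
    rw [← AddCircle.liftIoc_coe_apply (f := F) (by rwa [hb])]
    exact eq_fourierCoeff_zero_of_fourierCoeff_eq_zero G hc x
  intro x hx
  rcases hx.1.eq_or_lt with rfl | hax
  · rfl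
  · rw [hG x ⟨hax, hx.2⟩, hFab, hG b ⟨hab, le_rfl⟩]

theorem ae_eq_zero_of_fourierCoeffOn_eq_zero {h : ℝ → ℂ}
    (hh : IntervalIntegrable h volume a b) (hc : ∀ n, fourierCoeffOn hab h n = 0) :
    ∀ᵐ x ∂volume.restrict (Icc a b), h x = 0 := by
  set F : ℝ → ℂ := fun x => ∫ t in a..x, h t
  have hFa : F a = 0 := intervalIntegral.integral_same
  have hFb : F b = 0 := by
    have := hc 0
    rw [fourierCoeffOn_eq_integral, smul_eq_zero] at this
    simpa [fourier_zero] using this.resolve_left (one_div_ne_zero (sub_pos.2 hab).ne')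
  have hF : ContinuousOn F (Icc a b) := by
    rw [intervalIntegrable_iff_integrableOn_Icc_of_le hab.le, ← uIcc_of_le hab.le] at hh
    rw [← uIcc_of_le hab.le]
    exact intervalIntegral.continuousOn_primitive_interval hh
  refine ae_eq_zero_of_forall_intervalIntegral_eq_zero hh fun x hx => ?_
  refine hFa ▸ eqOn_of_fourierCoeffOn_eq_zero hab hF (hFa.trans hFb.symm) (fun n hn => ?_) x hx
  rw [fourierCoeffOn_primitive hab hh hn, show ∫ t in a..b, h t = F b from rfl, hFb, hc n]
  simp

theorem ae_eq_fourierCoeffOn_zero_of_fourierCoeffOn_eq_zero {f : ℝ → ℂ}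
    (hf : IntervalIntegrable f volume a b) (hc : ∀ n ≠ 0, fourierCoeffOn hab f n = 0) :
    ∀ᵐ x ∂volume.restrict (Icc a b), f x = fourierCoeffOn hab f 0 := by
  have hconst : IntervalIntegrable (fun _ => fourierCoeffOn hab f 0) volume a b :=
    intervalIntegrable_const
  refine (ae_eq_zero_of_fourierCoeffOn_eq_zero hab (hf.sub hconst) fun n => ?_).mono
    fun x hx => sub_eq_zero.1 hx
  rw [fourierCoeffOn_sub hab hf hconst, fourierCoeffOn_const]
  split_ifs with hn
  · rw [hn, sub_self]
  · rw [hc n hn, sub_zero]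

end Interval

theorem intervalIntegrable_comp_add_div {E : Type*} [NormedAddCommGroup E]
    {q : ℕ} (hq : q ≠ 0) {φ : ℝ → E}
    (hφ : IntervalIntegrable φ volume 0 1) {j : ℕ} (hj : j < q) :
    IntervalIntegrable (fun x => φ ((x + j) / q)) volume 0 1 := by
  have hq' : (q : ℝ) ≠ 0 := Nat.cast_ne_zero.2 hq
  simp only [add_div]
  refine IntervalIntegrable.comp_div_add hq' _ (hφ.mono_set (uIcc_subset_uIcc ?_ ?_)) <;>
    rw [uIcc_of_le zero_le_one] <;> refine ⟨by positivity, ?_⟩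
  · rw [zero_div, zero_add, div_le_one (by positivity)]; exact_mod_cast hj.le
  · rw [← add_div, div_le_one (by positivity), add_comm]; exact_mod_cast hj

theorem sum_integral_comp_add_div {E : Type*} [NormedAddCommGroup E] [NormedSpace ℝ E]
    {q : ℕ} (hq : q ≠ 0) {φ : ℝ → E}
    (hφ : IntervalIntegrable φ volume 0 1) :
    ∑ j ∈ Finset.range q, ∫ x in (0 : ℝ)..1, φ ((x + j) / q) =
      (q : ℝ) • ∫ y in (0 : ℝ)..1, φ y := by
  have hq' : (q : ℝ) ≠ 0 := Nat.cast_ne_zero.2 hq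
  have hmem : ∀ k ≤ q, (k : ℝ) / q ∈ uIcc (0 : ℝ) 1 := fun k hk => by
    rw [uIcc_of_le zero_le_one]
    exact ⟨by positivity, (div_le_one (by positivity)).2 (by exact_mod_cast hk)⟩
  have hpieces :=
    intervalIntegral.sum_integral_adjacent_intervals (a := fun k : ℕ => (k : ℝ) / q)
    fun k hk => hφ.mono_set (uIcc_subset_uIcc (hmem k hk.le) (hmem (k + 1) hk))
  simp only [Nat.cast_zero, zero_div, Nat.cast_add, Nat.cast_one, div_self hq'] at hpieces
  rw [← hpieces, Finset.smul_sum]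
  refine Finset.sum_congr rfl fun j _ => ?_
  simp only [add_div, intervalIntegral.integral_comp_div_add φ hq', zero_div, zero_add]
  rw [add_comm (1 / (q : ℝ)), ← add_div]

theorem fourier_coe_add_div_eq {q : ℕ} (hq : q ≠ 0) (n : ℤ) (j : ℕ) (x : ℝ) :
    fourier (-(q * n)) (((x + j) / q : ℝ) : AddCircle (1 : ℝ)) =
      fourier (-n) (x : AddCircle (1 : ℝ)) := by
  have hq' : (q : ℂ) ≠ 0 := Nat.cast_ne_zero.2 hq
  rw [fourier_coe_apply, fourier_coe_apply, Complex.exp_eq_exp_iff_exists_int]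
  refine ⟨-(n * j), ?_⟩
  push_cast
  field_simp
  ring

theorem fourierCoeffOn_zero_one_eq (f : ℝ → ℂ) (n : ℤ) :
    fourierCoeffOn (zero_lt_one' ℝ) f n =
      ∫ x in (0 : ℝ)..1, fourier (-n) (x : AddCircle (1 : ℝ)) * f x := by
  rw [fourierCoeffOn_eq_integral, sub_zero]
  simp

/-- The transfer operator of the map `x ↦ q * x mod 1` on `[0, 1]`. -/
noncomputable def transferOperator (q : ℕ) (f : ℝ → ℂ) (x : ℝ) : ℂ :=
  (1 / (q : ℂ)) * ∑ j ∈ Finset.range q, f ((x + j) / q)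

theorem fourierCoeffOn_mul_eq_of_ae_eq_transferOperator {q : ℕ} (hq : q ≠ 0) {f : ℝ → ℂ}
    (hf : IntegrableOn f (Icc 0 1))
    (heq : f =ᵐ[volume.restrict (Icc 0 1)] transferOperator q f) (n : ℤ) :
    fourierCoeffOn (zero_lt_one' ℝ) f (q * n) = fourierCoeffOn (zero_lt_one' ℝ) f n := by
  have hf' : IntervalIntegrable f volume 0 1 :=
    (intervalIntegrable_iff_integrableOn_Icc_of_le zero_le_one).2 hf
  set φ : ℝ → ℂ := fun y => fourier (-(q * n)) (y : AddCircle (1 : ℝ)) * f y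
  have hφ : IntervalIntegrable φ volume 0 1 :=
    hf'.continuousOn_mul ((map_continuous _).comp (AddCircle.continuous_mk' 1)).continuousOn
  have heq' : ∀ᵐ x ∂volume, x ∈ uIoc (0 : ℝ) 1 →
      fourier (-n) (x : AddCircle (1 : ℝ)) * f x =
        (1 / (q : ℂ)) * ∑ j ∈ Finset.range q, φ ((x + j) / q) := by
    filter_upwards [ae_restrict_iff' measurableSet_Icc |>.1 heq] with x hx hx'
    rw [hx (Ioc_subset_Icc_self (uIoc_of_le (zero_le_one' ℝ) ▸ hx'))]
    simp only [transferOperator, φ, fourier_coe_add_div_eq hq, Finset.mul_sum]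
    exact Finset.sum_congr rfl fun j _ => by ring
  have hq' : (q : ℂ) ≠ 0 := Nat.cast_ne_zero.2 hq
  rw [fourierCoeffOn_zero_one_eq, fourierCoeffOn_zero_one_eq,
    intervalIntegral.integral_congr_ae heq',
    intervalIntegral.integral_const_mul, intervalIntegral.integral_finsetSum
      fun j hj => intervalIntegrable_comp_add_div hq hφ (Finset.mem_range.1 hj),
    sum_integral_comp_add_div hq hφ, Complex.real_smul, one_div, ofReal_natCast,
    inv_mul_cancel_left₀ hq']

theorem fourierCoeffOn_eq_zero_of_ae_eq_transferOperator {q : ℕ} (hq : 2 ≤ q) {f : ℝ → ℂ}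
    (hf : IntegrableOn f (Icc 0 1))
    (heq : f =ᵐ[volume.restrict (Icc 0 1)] transferOperator q f) {n : ℤ} (hn : n ≠ 0) :
    fourierCoeffOn (zero_lt_one' ℝ) f n = 0 := by
  have hiter : ∀ k : ℕ, fourierCoeffOn (zero_lt_one' ℝ) f ((q : ℤ) ^ k * n) =
      fourierCoeffOn (zero_lt_one' ℝ) f n := by
    intro k
    induction k with
    | zero => simp
    | succ k ih =>
      rw [pow_succ', mul_assoc,
        fourierCoeffOn_mul_eq_of_ae_eq_transferOperator (by omega) hf heq, ih]
  have hinj : Function.Injective fun k : ℕ => (q : ℤ) ^ k * n := fun k m hkm =>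
    Nat.pow_right_injective hq (by exact_mod_cast mul_right_cancel₀ hn hkm)
  have hlim := (tendsto_fourierCoeffOn_cofinite (zero_lt_one' ℝ) f).comp hinj.tendsto_cofinite
  rw [Nat.cofinite_eq_atTop] at hlim
  exact tendsto_nhds_unique (tendsto_const_nhds.congr fun k => (hiter k).symm) hlim

/-- Any `L¹` solution of the averaging functional equation on `[0,1]` is a.e. constant,
equal to its integral. -/
theorem stmt_4 (q : ℕ) (hq : 2 ≤ q) (f : ℝ → ℂ)
    (hint : IntegrableOn f (Set.Icc 0 1))
    (heq : ∀ᵐ x ∂(volume.restrict (Set.Icc (0 : ℝ) 1)),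
      f x = (1 / (q : ℂ)) * ∑ j ∈ Finset.range q, f ((x + j) / q)) :
    ∀ᵐ x ∂(volume.restrict (Set.Icc (0 : ℝ) 1)), f x = ∫ y in Set.Icc (0 : ℝ) 1, f y := by
  have hf : IntervalIntegrable f volume 0 1 :=
    (intervalIntegrable_iff_integrableOn_Icc_of_le zero_le_one).2 hint
  have hmean : fourierCoeffOn (zero_lt_one' ℝ) f 0 = ∫ y in Icc (0 : ℝ) 1, f y := by
    rw [fourierCoeffOn_zero_one_eq, integral_Icc_eq_integral_Ioc,
      ← intervalIntegral.integral_of_le zero_le_one]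
    simp
  rw [← hmean]
  exact ae_eq_fourierCoeffOn_zero_of_fourierCoeffOn_eq_zero _ hf fun n hn =>
    fourierCoeffOn_eq_zero_of_ae_eq_transferOperator hq hint heq hn
end

section
/- Let q ≥ 2 be an integer and F a CDF on [0,1] satisfying the stationarity functional equation. If s ∈ [0,1] is a discontinuity point of F, then there exist n ∈ ℕ and a cycle (s₁,...,s_n) with s = s₁ such that s₁,...,s_n are all discontinuity points of F and the jumps of F at these n points are all equal. -/
/-!
Let `T y = q y + 1 - ⌈q y⌉` be the base-`q` shift on `(0, 1]`; the preimages of `x ∈ (0, 1]` under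
`T` are the points `(x + j) / q`, `j < q`. Passing to left limits in the functional equation shows
that the atom of `μ` at `x` is the sum of the atoms at these preimages. Hence atoms do not decrease
along a `T`-orbit, and two distinct orbit points with the same image would together weigh at most
that image, which the orbit later returns to. As only finitely many atoms weigh at least `μ {s}`,
the orbit of an atom `s > 0` is purely periodic with constant mass, and reading off the digits
along the cycle gives the base-`q` expansions of its points.
-/

open MeasureTheory Filter Function Set ProbabilityTheory Topology

theorem StieltjesFunction.continuousAt_iff_measure_singleton_eq_zero (f : StieltjesFunction ℝ)
    (x : ℝ) : ContinuousAt f x ↔ f.measure {x} = 0 := by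
  rw [f.mono.continuousAt_iff_leftLim_eq_rightLim, f.rightLim_eq, f.measure_singleton,
    ENNReal.ofReal_eq_zero, sub_nonpos]
  exact ⟨le_of_eq ∘ Eq.symm, fun h => (le_antisymm (f.mono.leftLim_le le_rfl) h)⟩

theorem ProbabilityTheory.measure_singleton_eq_ofReal_cdf_sub_leftLim (μ : Measure ℝ)
    [IsProbabilityMeasure μ] (x : ℝ) : μ {x} = ENNReal.ofReal (cdf μ x - leftLim (cdf μ) x) := by
  conv_lhs => rw [← measure_cdf μ]
  exact (cdf μ).measure_singleton x

theorem ProbabilityTheory.continuousAt_cdf_iff (μ : Measure ℝ) [IsProbabilityMeasure μ] (x : ℝ) :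
    ContinuousAt (cdf μ) x ↔ μ {x} = 0 := by
  rw [(cdf μ).continuousAt_iff_measure_singleton_eq_zero, measure_cdf]

theorem Monotone.sub_leftLim_eq_sum_of_stationary {F : ℝ → ℝ} (hF : Monotone F) {q : ℕ}
    (hq : 0 < q)
    (heq : ∀ x ∈ Icc (0 : ℝ) 1, F x = F 0 + ∑ j ∈ Finset.range q, (F ((x + j) / q) - F (j / q)))
    {x : ℝ} (hx : x ∈ Ioc 0 1) :
    F x - leftLim F x = ∑ j ∈ Finset.range q, (F ((x + j) / q) - leftLim F ((x + j) / q)) := by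
  have hpre : ∀ j : ℕ, Tendsto (fun y : ℝ => (y + j) / q) (𝓝[<] x) (𝓝[<] ((x + j) / q)) :=
    fun j => tendsto_nhdsWithin_of_tendsto_nhds_of_eventually_within _
      (((tendsto_id.add_const _).div_const _).mono_left nhdsWithin_le_nhds)
      (eventually_nhdsWithin_of_forall fun y (hy : y < x) =>
        div_lt_div_of_pos_right (add_lt_add_left hy _) (Nat.cast_pos.2 hq))
  have hrhs : Tendsto (fun y : ℝ => F 0 + ∑ j ∈ Finset.range q, (F ((y + j) / q) - F (j / q)))
      (𝓝[<] x) (𝓝 (F 0 + ∑ j ∈ Finset.range q, (leftLim F ((x + j) / q) - F (j / q)))) :=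
    tendsto_const_nhds.add <| tendsto_finsetSum _ fun j _ =>
      ((hF.tendsto_leftLim _).comp (hpre j)).sub tendsto_const_nhds
  have heq_near : (fun y : ℝ => F 0 + ∑ j ∈ Finset.range q, (F ((y + j) / q) - F (j / q)))
      =ᶠ[𝓝[<] x] F := by
    filter_upwards [Ioo_mem_nhdsLT hx.1] with y hy
    exact (heq y ⟨hy.1.le, hy.2.le.trans hx.2⟩).symm
  have hleft : leftLim F x = F 0 + ∑ j ∈ Finset.range q, (leftLim F ((x + j) / q) - F (j / q)) :=
    tendsto_nhds_unique (hF.tendsto_leftLim x) (hrhs.congr' heq_near)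
  rw [heq x (Ioc_subset_Icc_self hx), hleft, add_sub_add_left_eq_sub, ← Finset.sum_sub_distrib]
  exact Finset.sum_congr rfl fun j _ => by ring

/-- Atoms of `μ` are invariant under the transfer operator of the base-`q` shift. -/
def AtomTransferInvariant (q : ℕ) (μ : Measure ℝ) : Prop :=
  ∀ x ∈ Ioc (0 : ℝ) 1, μ {x} = ∑ j ∈ Finset.range q, μ {(x + j) / q}

theorem atomTransferInvariant_of_stationary {q : ℕ} (hq : 0 < q) (μ : Measure ℝ)
    [IsProbabilityMeasure μ]
    (heq : ∀ x ∈ Icc (0 : ℝ) 1,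
      cdf μ x = cdf μ 0 + ∑ j ∈ Finset.range q, (cdf μ ((x + j) / q) - cdf μ (j / q))) :
    AtomTransferInvariant q μ := by
  intro x hx
  simp only [measure_singleton_eq_ofReal_cdf_sub_leftLim]
  rw [(cdf μ).mono.sub_leftLim_eq_sum_of_stationary hq heq hx,
    ENNReal.ofReal_sum_of_nonneg fun j _ => sub_nonneg.2 ((cdf μ).mono.leftLim_le le_rfl)]

section BaseShift

/-- The base-`q` shift, normalised (through `⌈⬝⌉` rather than `⌊⬝⌋`) to take values in `(0, 1]`,
so that `1 = (0.(q-1)(q-1)…)_q` is a fixed point with digit `q - 1`. -/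
noncomputable def baseShift (q : ℕ) (y : ℝ) : ℝ := q * y + 1 - ⌈(q : ℝ) * y⌉

noncomputable def baseDigit (q : ℕ) (y : ℝ) : ℕ := (⌈(q : ℝ) * y⌉ - 1).toNat

theorem baseShift_mem_Ioc (q : ℕ) (y : ℝ) : baseShift q y ∈ Ioc 0 1 := by
  unfold baseShift
  constructor
  · linarith [Int.ceil_lt_add_one ((q : ℝ) * y)]
  · linarith [Int.le_ceil ((q : ℝ) * y)]

variable {q : ℕ}

theorem iterate_baseShift_pos {x : ℝ} (hx : 0 < x) (k : ℕ) : 0 < (baseShift q)^[k] x := by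
  cases k with
  | zero => exact hx
  | succ k => rw [iterate_succ_apply']; exact (baseShift_mem_Ioc q _).1

theorem iterate_baseShift_mem_Ioc {x : ℝ} (hx : x ∈ Ioc 0 1) (k : ℕ) :
    (baseShift q)^[k] x ∈ Ioc 0 1 := by
  cases k with
  | zero => exact hx
  | succ k => rw [iterate_succ_apply']; exact baseShift_mem_Ioc q _

theorem baseDigit_lt (hq : 0 < q) {y : ℝ} (hy : y ≤ 1) : baseDigit q y < q := by
  have : ⌈(q : ℝ) * y⌉ ≤ q :=
    Int.ceil_le.2 (by push_cast; nlinarith [(Nat.cast_pos (α := ℝ)).2 hq])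
  unfold baseDigit
  omega

theorem eq_baseShift_add_baseDigit_div (hq : 0 < q) {y : ℝ} (hy : 0 < y) :
    y = (baseShift q y + baseDigit q y) / q := by
  have hceil : 1 ≤ ⌈(q : ℝ) * y⌉ := Int.one_le_ceil_iff.2 (by positivity)
  have hdigit : (baseDigit q y : ℝ) = ⌈(q : ℝ) * y⌉ - 1 := by
    rw [baseDigit, ← Int.cast_natCast, Int.toNat_of_nonneg (by omega)]
    push_cast; ring
  rw [hdigit, baseShift]
  field_simp
  ring

theorem eq_sum_baseDigit_add_iterate (hq : 0 < q) {x : ℝ} (hx : 0 < x) (m : ℕ) :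
    x = ∑ j ∈ Finset.range m, (baseDigit q ((baseShift q)^[j] x) : ℝ) / (q : ℝ) ^ (j + 1)
      + (baseShift q)^[m] x / (q : ℝ) ^ m := by
  induction m generalizing x with
  | zero => simp
  | succ m ih =>
    conv_lhs => rw [eq_baseShift_add_baseDigit_div hq hx,
      ih (baseShift_mem_Ioc q x).1]
    simp only [Finset.sum_range_succ', iterate_succ_apply, iterate_zero_apply]
    rw [add_div, add_div, Finset.sum_div]
    simp only [pow_succ, div_div, zero_add, pow_zero, one_mul]
    ring

theorem eq_sum_baseDigit_div_of_isPeriodicPt (hq : 1 < q) {x : ℝ} (hx : 0 < x) {n : ℕ}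
    (hn : 0 < n) (h : IsPeriodicPt (baseShift q) n x) :
    x = (∑ j ∈ Finset.range n, (baseDigit q ((baseShift q)^[j] x) : ℝ) / (q : ℝ) ^ (j + 1))
      / (1 - ((q : ℝ) ^ n)⁻¹) := by
  have hqn : 1 < (q : ℝ) ^ n := one_lt_pow₀ (by exact_mod_cast hq) hn.ne'
  have hexp := eq_sum_baseDigit_add_iterate (zero_lt_one.trans hq) hx n
  rw [h.eq] at hexp
  rw [eq_div_iff (by linarith [inv_lt_one_of_one_lt₀ hqn]), mul_sub, mul_one, ← div_eq_mul_inv]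
  linarith

theorem iterate_baseShift_neg_eq_sum (hq : 1 < q) {x : ℝ} (hx : 0 < x) {n : ℕ}
    (h : IsPeriodicPt (baseShift q) n x) (k : Fin n) :
    (baseShift q)^[((-k : Fin n) : ℕ)] x =
      (∑ j : Fin n, (baseDigit q ((baseShift q)^[((j - k : Fin n) : ℕ)] x) : ℝ)
        / (q : ℝ) ^ ((j : ℕ) + 1)) / (1 - ((q : ℝ) ^ n)⁻¹) := by
  refine (eq_sum_baseDigit_div_of_isPeriodicPt hq (iterate_baseShift_pos hx _) k.pos
    (h.apply_iterate _)).trans ?_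
  rw [← Fin.sum_univ_eq_sum_range (fun j => (baseDigit q ((baseShift q)^[j]
    ((baseShift q)^[((-k : Fin n) : ℕ)] x)) : ℝ) / (q : ℝ) ^ (j + 1)) n]
  congr 1
  refine Finset.sum_congr rfl fun j _ => ?_
  rw [← iterate_add_apply, ← h.iterate_mod_apply, Fin.val_sub, Fin.val_neg', Nat.add_mod_mod,
    add_comm]

end BaseShift

section Atoms

variable {q : ℕ} {μ : Measure ℝ}

theorem AtomTransferInvariant.atom_le_atom_baseShift (hμ : AtomTransferInvariant q μ)
    (hq : 0 < q) {y : ℝ} (hy : y ∈ Ioc 0 1) : μ {y} ≤ μ {baseShift q y} := by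
  rw [hμ _ (baseShift_mem_Ioc q y)]
  conv_lhs => rw [eq_baseShift_add_baseDigit_div hq hy.1]
  exact Finset.single_le_sum (f := fun j : ℕ => μ {(baseShift q y + j) / q}) (fun _ _ => zero_le)
    (Finset.mem_range.2 (baseDigit_lt hq hy.2))

theorem AtomTransferInvariant.atom_add_atom_le (hμ : AtomTransferInvariant q μ) (hq : 0 < q)
    {y y' : ℝ} (hy : y ∈ Ioc 0 1) (hy' : y' ∈ Ioc 0 1) (hne : y ≠ y')
    (h : baseShift q y = baseShift q y') : μ {y} + μ {y'} ≤ μ {baseShift q y} := by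
  have hdigit : baseDigit q y ≠ baseDigit q y' := fun hd => hne <| by
    rw [eq_baseShift_add_baseDigit_div hq hy.1, eq_baseShift_add_baseDigit_div hq hy'.1, h, hd]
  calc μ {y} + μ {y'}
      = ∑ j ∈ {baseDigit q y, baseDigit q y'}, μ {(baseShift q y + j) / q} := by
        rw [Finset.sum_pair hdigit, ← eq_baseShift_add_baseDigit_div hq hy.1, h,
          ← eq_baseShift_add_baseDigit_div hq hy'.1]
    _ ≤ ∑ j ∈ Finset.range q, μ {(baseShift q y + j) / q} := by
        refine Finset.sum_le_sum_of_subset fun j hj => Finset.mem_range.2 ?_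
        rcases Finset.mem_insert.1 hj with rfl | hj
        · exact baseDigit_lt hq hy.2
        · rw [Finset.mem_singleton.1 hj]; exact baseDigit_lt hq hy'.2
    _ = μ {baseShift q y} := (hμ _ (baseShift_mem_Ioc q y)).symm

theorem AtomTransferInvariant.monotone_atom_iterate (hμ : AtomTransferInvariant q μ)
    (hq : 0 < q) {x : ℝ} (hx : x ∈ Ioc 0 1) : Monotone fun k => μ {(baseShift q)^[k] x} :=
  monotone_nat_of_le_succ fun k => by
    rw [iterate_succ_apply']
    exact hμ.atom_le_atom_baseShift hq (iterate_baseShift_mem_Ioc hx k)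

theorem AtomTransferInvariant.iterate_eq_of_iterate_succ_eq [IsFiniteMeasure μ]
    (hμ : AtomTransferInvariant q μ) (hq : 0 < q) {x : ℝ} (hx : x ∈ Ioc 0 1) (hatom : 0 < μ {x})
    {i j : ℕ} (h : (baseShift q)^[i + 1] x = (baseShift q)^[j + 1] x) :
    (baseShift q)^[i] x = (baseShift q)^[j] x := by
  wlog hij : i < j generalizing i j
  · rcases (not_lt.1 hij).eq_or_lt with rfl | hji
    · rfl
    · exact (this h.symm hji).symm
  by_contra hne
  have hmono := hμ.monotone_atom_iterate hq hx
  rw [iterate_succ_apply', iterate_succ_apply'] at h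
  have hsum : μ {(baseShift q)^[i] x} + μ {(baseShift q)^[j] x} ≤ 0 + μ {(baseShift q)^[j] x} :=
    calc _ ≤ μ {baseShift q ((baseShift q)^[i] x)} :=
          hμ.atom_add_atom_le hq (iterate_baseShift_mem_Ioc hx i)
            (iterate_baseShift_mem_Ioc hx j) hne h
      _ = μ {(baseShift q)^[i + 1] x} := by rw [iterate_succ_apply']
      _ ≤ _ := by rw [zero_add]; exact hmono hij
  have hzero := ENNReal.le_of_add_le_add_right (measure_ne_top μ _) hsum
  exact hatom.not_ge ((hmono (Nat.zero_le i)).trans hzero)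

theorem Function.isPeriodicPt_sub_of_iterate_eq {α : Type*} {f : α → α} {x : α}
    (hinj : ∀ i j, f^[i + 1] x = f^[j + 1] x → f^[i] x = f^[j] x) {a b : ℕ} (hab : a ≤ b)
    (h : f^[a] x = f^[b] x) : IsPeriodicPt f (b - a) x := by
  induction a generalizing b with
  | zero => exact h.symm
  | succ a ih =>
    obtain ⟨b, rfl⟩ : ∃ b', b = b' + 1 := ⟨b - 1, by omega⟩
    simpa using ih (by omega) (hinj a b h)

theorem AtomTransferInvariant.mem_periodicPts [IsFiniteMeasure μ]
    (hμ : AtomTransferInvariant q μ) (hq : 0 < q) {x : ℝ} (hx : x ∈ Ioc 0 1)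
    (hatom : 0 < μ {x}) : x ∈ periodicPts (baseShift q) := by
  have hfin : {y : ℝ | μ {x} ≤ μ {y}}.Finite :=
    Measure.finite_const_le_meas_of_disjoint_iUnion μ hatom measurableSet_singleton
      (fun y z hyz => disjoint_singleton.2 hyz) (measure_ne_top μ _)
  obtain ⟨a, b, hab, h⟩ := hfin.exists_lt_map_eq_of_forall_mem
    (f := fun k => (baseShift q)^[k] x)
    (fun k => hμ.monotone_atom_iterate hq hx (Nat.zero_le k))
  exact mk_mem_periodicPts (by omega) <| isPeriodicPt_sub_of_iterate_eq
    (fun i j => hμ.iterate_eq_of_iterate_succ_eq hq hx hatom) hab.le h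

theorem AtomTransferInvariant.atom_iterate_eq (hμ : AtomTransferInvariant q μ) (hq : 0 < q)
    {x : ℝ} (hx : x ∈ Ioc 0 1) {n : ℕ} (hn : 0 < n) (h : IsPeriodicPt (baseShift q) n x)
    (k : ℕ) : μ {(baseShift q)^[k] x} = μ {x} := by
  have hmono := hμ.monotone_atom_iterate hq hx
  refine le_antisymm ?_ (hmono (Nat.zero_le k))
  calc μ {(baseShift q)^[k] x} ≤ μ {(baseShift q)^[k * n] x} :=
        hmono (Nat.le_mul_of_pos_right k hn)
    _ = μ {x} := by rw [(h.const_mul k).eq]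

end Atoms

theorem Function.injective_iterate_neg_fin_minimalPeriod {α : Type*} (f : α → α) (x : α) :
    Injective fun k : Fin (minimalPeriod f x) => f^[((-k : Fin _) : ℕ)] x := by
  intro a b hab
  have : NeZero (minimalPeriod f x) := NeZero.of_pos a.pos
  exact neg_injective (Fin.ext ((iterate_eq_iterate_iff_of_lt_minimalPeriod
    (Fin.is_lt _) (Fin.is_lt _)).1 hab))

theorem stmt_12_general (q : ℕ) (hq : 2 ≤ q) (μ : Measure ℝ) [IsProbabilityMeasure μ]
    (F : ℝ → ℝ) (hF : ∀ x, F x = (μ (Set.Iic x)).toReal)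
    (heq : ∀ x ∈ Set.Icc (0 : ℝ) 1,
      F x = F 0 + ∑ j ∈ Finset.range q, (F ((x + j) / q) - F ((j : ℝ) / q)))
    (s₀ : ℝ) (hs₀ : s₀ ∈ Set.Icc (0 : ℝ) 1) (hdisc : ¬ ContinuousAt F s₀) :
    ∃ (n : ℕ) (hn : 0 < n) (t : Fin n → ℕ) (s : Fin n → ℝ),
      (∀ i, t i < q) ∧
      (∀ k : Fin n, s k =
        (∑ j : Fin n, (t (j - k) : ℝ) / (q : ℝ) ^ ((j : ℕ) + 1)) / (1 - ((q : ℝ) ^ n)⁻¹)) ∧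
      Function.Injective s ∧
      s ⟨0, hn⟩ = s₀ ∧
      (∀ k : Fin n, ¬ ContinuousAt F (s k)) ∧
      (∀ k : Fin n, μ {s k} = μ {s₀}) := by
  have hq0 : 0 < q := by omega
  have hFcdf : F = cdf μ := funext fun x => by rw [hF, cdf_eq_real]; rfl
  subst hFcdf
  have hμ : AtomTransferInvariant q μ := atomTransferInvariant_of_stationary hq0 μ heq
  have hatom : 0 < μ {s₀} := pos_iff_ne_zero.2 fun h => hdisc ((continuousAt_cdf_iff μ s₀).2 h)
  rcases hs₀.1.eq_or_lt with rfl | hpos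
  · exact ⟨1, one_pos, fun _ => 0, fun _ => 0, fun _ => hq0, fun _ => by simp,
      fun _ _ _ => Subsingleton.elim _ _, rfl, fun _ => hdisc, fun _ => rfl⟩
  have hs₀' : s₀ ∈ Ioc 0 1 := ⟨hpos, hs₀.2⟩
  have hper := hμ.mem_periodicPts hq0 hs₀' hatom
  set n := minimalPeriod (baseShift q) s₀
  have hn : 0 < n := minimalPeriod_pos_of_mem_periodicPts hper
  have hmin : IsPeriodicPt (baseShift q) n s₀ := isPeriodicPt_minimalPeriod _ _
  have hmass (k : Fin n) : μ {(baseShift q)^[((-k : Fin n) : ℕ)] s₀} = μ {s₀} :=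
    hμ.atom_iterate_eq hq0 hs₀' hn hmin _
  refine ⟨n, hn, fun j => baseDigit q ((baseShift q)^[j] s₀),
    fun k => (baseShift q)^[((-k : Fin n) : ℕ)] s₀,
    fun j => baseDigit_lt hq0 (iterate_baseShift_mem_Ioc hs₀' j).2,
    iterate_baseShift_neg_eq_sum (by omega) hpos hmin,
    injective_iterate_neg_fin_minimalPeriod _ _,
    by dsimp only; rw [Fin.val_neg', Nat.sub_zero, Nat.mod_self, iterate_zero_apply],
    fun k h => ((continuousAt_cdf_iff μ _).1 h).not_gt (hmass k ▸ hatom), hmass⟩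

/-- Every discontinuity point of a CDF satisfying the stationarity functional equation
belongs to a cycle of purely repeating base-`q` numbers which are all discontinuity
points with equal jumps. -/
theorem stmt_12 (q : ℕ) (hq : 2 ≤ q) (μ : Measure ℝ) [IsProbabilityMeasure μ]
    (hsupp : μ (Set.Icc 0 1) = 1)
    (F : ℝ → ℝ) (hF : ∀ x, F x = (μ (Set.Iic x)).toReal)
    (heq : ∀ x ∈ Set.Icc (0 : ℝ) 1,
      F x = F 0 + ∑ j ∈ Finset.range q, (F ((x + j) / q) - F ((j : ℝ) / q)))
    (s₀ : ℝ) (hs₀ : s₀ ∈ Set.Icc (0 : ℝ) 1) (hdisc : ¬ ContinuousAt F s₀) :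
    ∃ (n : ℕ) (hn : 0 < n) (t : Fin n → ℕ) (s : Fin n → ℝ),
      (∀ i, t i < q) ∧
      (∀ k : Fin n, s k =
        (∑ j : Fin n, (t (j - k) : ℝ) / (q : ℝ) ^ ((j : ℕ) + 1)) / (1 - ((q : ℝ) ^ n)⁻¹)) ∧
      Function.Injective s ∧
      s ⟨0, hn⟩ = s₀ ∧
      (∀ k : Fin n, ¬ ContinuousAt F (s k)) ∧
      (∀ k : Fin n, μ {s k} = μ {s₀}) :=
  stmt_12_general q hq μ F hF heq s₀ hs₀ hdisc
end

section
/- Let q ≥ 2 be an integer and (s₁,...,s_n) a cycle of order n. Then the empirical CDF F(x) = (1/n) Σ_{j=1}^n H(x − s_j) satisfies the stationarity functional equation F(x) = F(0) + Σ_{j=0}^{q-1}[F((x+j)/q) − F(j/q)] for all x ∈ [0,1]. -/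
/-!
Write `s'` for the predecessor of `s` in the cycle and `d` for the first digit of `s`, so that
`q s = d + s'`. Then `(y + j)/q ≥ s` iff `y + j - d ≥ s'`, and in
`∑ j < q, H((x + j)/q - s) - H(j/q - s)` all terms with `j ≠ d` cancel (both Heaviside values
are `0` for `j < d` and `1` for `j > d`, using `x, s' ∈ [0, 1]`, and `s' > 0` when `d > 0`
because a cycle containing `0` is all zeros), leaving `H(x - s') - H(-s')`.
Summing over the cycle, `s'` runs through the cycle once more, which gives the equation.
-/

open Finset

noncomputable section

def heaviside (x : ℝ) : ℝ := if 0 ≤ x then 1 else 0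

lemma heaviside_div {x c : ℝ} (hc : 0 < c) : heaviside (x / c) = heaviside x := by
  simp [heaviside, div_nonneg_iff, hc.le, hc.not_ge]

lemma heaviside_of_nonneg {x : ℝ} (hx : 0 ≤ x) : heaviside x = 1 := if_pos hx

lemma heaviside_of_neg {x : ℝ} (hx : x < 0) : heaviside x = 0 := if_neg hx.not_ge

lemma sum_heaviside_sub_of_mul_eq {q d : ℕ} (hd : d < q) {s s' x : ℝ} (hrec : q * s = d + s')
    (hs' : s' ∈ Set.Icc 0 1) (hzero : s' = 0 → d = 0) (hx : x ∈ Set.Icc 0 1) :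
    ∑ j ∈ range q, (heaviside ((x + j) / q - s) - heaviside (j / q - s)) =
      heaviside (x - s') - heaviside (-s') := by
  have hq : (0 : ℝ) < q := by exact_mod_cast (Nat.zero_le d).trans_lt hd
  have hshift (y : ℝ) : heaviside (y / q - s) = heaviside (y - d - s') := by
    have : y / q - s = (y - d - s') / q := by
      field_simp
      linear_combination -hrec
    rw [this, heaviside_div hq]
  simp only [hshift]
  rw [sum_eq_single_of_mem d (mem_range.2 hd)]
  · ring_nf
  intro j _ hjd
  obtain ⟨hx0, hx1⟩ := hx
  obtain ⟨hs'0, hs'1⟩ := hs'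
  rcases hjd.lt_or_gt with hlt | hgt
  · have hs'pos : 0 < s' := hs'0.lt_of_ne fun h => by have := hzero h.symm; omega
    have : (j : ℝ) + 1 ≤ d := by exact_mod_cast hlt
    rw [heaviside_of_neg (by linarith), heaviside_of_neg (by linarith), sub_self]
  · have : (d : ℝ) + 1 ≤ j := by exact_mod_cast hgt
    rw [heaviside_of_nonneg (by linarith), heaviside_of_nonneg (by linarith), sub_self]

def empiricalCDF {ι : Type*} [Fintype ι] (s : ι → ℝ) (x : ℝ) : ℝ :=
  (1 / Fintype.card ι) * ∑ k, heaviside (x - s k)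

theorem empiricalCDF_eq_add_sum_of_mul_eq {ι : Type*} [Fintype ι] (σ : Equiv.Perm ι) {q : ℕ}
    {s : ι → ℝ} {d : ι → ℕ} (hrec : ∀ k, q * s k = d k + s (σ k)) (hs : ∀ k, s k ∈ Set.Icc 0 1)
    (hd : ∀ k, d k < q) (hzero : ∀ k, s (σ k) = 0 → d k = 0) {x : ℝ} (hx : x ∈ Set.Icc 0 1) :
    empiricalCDF s x = empiricalCDF s 0 +
      ∑ j ∈ range q, (empiricalCDF s ((x + j) / q) - empiricalCDF s (j / q)) := by
  simp only [empiricalCDF, ← mul_sub, ← mul_sum, ← mul_add]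
  congr 1
  calc ∑ k, heaviside (x - s k)
      = ∑ k, heaviside (0 - s k) + ∑ k, (heaviside (x - s (σ k)) - heaviside (-s (σ k))) := by
        rw [Equiv.sum_comp σ (fun k => heaviside (x - s k) - heaviside (-s k)), sum_sub_distrib]
        simp
    _ = _ := by
        simp only [← sum_sub_distrib]
        rw [sum_comm]
        congr 1
        exact sum_congr rfl fun k _ =>
          (sum_heaviside_sub_of_mul_eq (hd k) (hrec k) (hs (σ k)) (hzero k) hx).symm

/-- The purely repeating base-`q` number `0.(t₋ₖ t₁₋ₖ … tₙ₋₁₋ₖ)`, indices mod `n`: one period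
divided by `1 - q⁻ⁿ`. As `k` runs through `Fin n` this is the cycle generated by `t`. -/
def repeatingValue {n : ℕ} (q : ℕ) (t : Fin n → ℕ) (k : Fin n) : ℝ :=
  (∑ j : Fin n, (t (j - k) : ℝ) / (q : ℝ) ^ ((j : ℕ) + 1)) / (1 - ((q : ℝ) ^ n)⁻¹)

lemma one_sub_inv_pow_pos {q : ℕ} (hq : 1 < q) {n : ℕ} (hn : n ≠ 0) :
    0 < 1 - ((q : ℝ) ^ n)⁻¹ := by
  have : ((q : ℝ) ^ n)⁻¹ < 1 := inv_lt_one_of_one_lt₀ (one_lt_pow₀ (by exact_mod_cast hq) hn)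
  linarith

lemma mul_repeatingValue {m q : ℕ} (hq : 1 < q) (t : Fin (m + 1) → ℕ) (k : Fin (m + 1)) :
    q * repeatingValue q t k = t (-k) + repeatingValue q t (k - 1) := by
  have hq0 : (q : ℝ) ≠ 0 := by positivity
  set U : Fin (m + 1) → ℝ := fun k => ∑ j : Fin (m + 1), (t (j - k) : ℝ) / (q : ℝ) ^ ((j : ℕ) + 1)
  set S := ∑ i : Fin m, (t (i.succ - k) : ℝ) / (q : ℝ) ^ ((i : ℕ) + 1)
  have hsucc : q * U k = t (-k) + S := by
    rw [mul_sum, Fin.sum_univ_succ]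
    congr 1
    · simp [mul_div_cancel₀ _ hq0]
    · refine sum_congr rfl fun i _ => ?_
      rw [Fin.val_succ, pow_succ _ (i + 1)]
      field_simp
  have hcastSucc : U (k - 1) = S + t (-k) / (q : ℝ) ^ (m + 1) := by
    simp only [U, S, Fin.sum_univ_castSucc, sub_sub_eq_add_sub, Fin.coeSucc_eq_succ,
      Fin.last_add_one, zero_sub, Fin.val_castSucc, Fin.val_last]
  have hU : q * U k = t (-k) * (1 - ((q : ℝ) ^ (m + 1))⁻¹) + U (k - 1) := by
    rw [hsucc, hcastSucc]
    ring
  rw [repeatingValue, repeatingValue, mul_div_assoc', hU, add_div,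
    mul_div_cancel_right₀ _ (one_sub_inv_pow_pos hq m.succ_ne_zero).ne']

lemma sum_range_sub_one_div_pow_succ {q : ℝ} (hq : q ≠ 0) (n : ℕ) :
    ∑ j ∈ range n, (q - 1) / q ^ (j + 1) = 1 - (q ^ n)⁻¹ := by
  have hterm (j : ℕ) : (q - 1) / q ^ (j + 1) = (q ^ j)⁻¹ - (q ^ (j + 1))⁻¹ := by
    field_simp
    ring
  simp only [hterm, sum_range_sub' (fun j => (q ^ j)⁻¹), pow_zero, inv_one]

lemma repeatingValue_mem_Icc {n q : ℕ} (hq : 1 < q) {t : Fin n → ℕ} (ht : ∀ i, t i < q)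
    (k : Fin n) : repeatingValue q t k ∈ Set.Icc 0 1 := by
  have hD := one_sub_inv_pow_pos hq k.pos.ne'
  rw [repeatingValue, Set.mem_Icc, div_le_one hD]
  refine ⟨by positivity, ?_⟩
  calc ∑ j : Fin n, (t (j - k) : ℝ) / (q : ℝ) ^ ((j : ℕ) + 1)
      ≤ ∑ j : Fin n, ((q : ℝ) - 1) / (q : ℝ) ^ ((j : ℕ) + 1) := by
        refine sum_le_sum fun j _ => ?_
        have : (t (j - k) : ℝ) + 1 ≤ q := by exact_mod_cast ht (j - k)
        gcongr
        linarith
    _ = 1 - ((q : ℝ) ^ n)⁻¹ := by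
        rw [Fin.sum_univ_eq_sum_range (fun j => ((q : ℝ) - 1) / (q : ℝ) ^ (j + 1)),
          sum_range_sub_one_div_pow_succ (by positivity)]

lemma eq_zero_of_repeatingValue_eq_zero {n q : ℕ} [NeZero n] (hq : 1 < q) {t : Fin n → ℕ}
    {k : Fin n} (h : repeatingValue q t k = 0) (i : Fin n) : t i = 0 := by
  rw [repeatingValue, div_eq_zero_iff,
    or_iff_left (one_sub_inv_pow_pos hq (NeZero.ne n)).ne'] at h
  have := (sum_eq_zero_iff_of_nonneg fun j _ => by positivity).1 h (i + k) (mem_univ _)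
  rw [add_sub_cancel_right i k, div_eq_zero_iff, or_iff_left (by positivity)] at this
  exact_mod_cast this

end

theorem stmt_13_general (q n : ℕ) (hq : 2 ≤ q)
    (t : Fin n → ℕ) (ht : ∀ i, t i < q)
    (s : Fin n → ℝ)
    (hs : ∀ k : Fin n, s k =
      (∑ j : Fin n, (t (j - k) : ℝ) / (q : ℝ) ^ ((j : ℕ) + 1)) / (1 - ((q : ℝ) ^ n)⁻¹))
    (H : ℝ → ℝ) (hH : ∀ x, H x = if 0 ≤ x then 1 else 0)
    (F : ℝ → ℝ) (hF : ∀ x, F x = (1 / n) * ∑ k : Fin n, H (x - s k)) :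
    ∀ x ∈ Set.Icc (0 : ℝ) 1,
      F x = F 0 + ∑ j ∈ Finset.range q, (F ((x + j) / q) - F ((j : ℝ) / q)) := by
  intro x hx
  obtain rfl | hn := n.eq_zero_or_pos
  · simp [hF]
  obtain ⟨m, rfl⟩ := Nat.exists_eq_add_one_of_ne_zero hn.ne'
  obtain rfl : H = heaviside := funext hH
  obtain rfl : s = repeatingValue q t := funext hs
  obtain rfl : F = empiricalCDF (repeatingValue q t) :=
    funext fun y => by simp [hF, empiricalCDF]
  exact empiricalCDF_eq_add_sum_of_mul_eq (Equiv.subRight 1) (d := fun k => t (-k))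
    (mul_repeatingValue hq t) (repeatingValue_mem_Icc hq ht) (fun k => ht _)
    (fun k h => eq_zero_of_repeatingValue_eq_zero hq h _) hx

/-- The empirical CDF of a cycle of purely repeating base-`q` numbers satisfies the
stationarity functional equation. -/
theorem stmt_13 (q n : ℕ) (hq : 2 ≤ q) (hn : 0 < n)
    (t : Fin n → ℕ) (ht : ∀ i, t i < q)
    (s : Fin n → ℝ)
    (hs : ∀ k : Fin n, s k =
      (∑ j : Fin n, (t (j - k) : ℝ) / (q : ℝ) ^ ((j : ℕ) + 1)) / (1 - ((q : ℝ) ^ n)⁻¹))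
    (hdistinct : Function.Injective s)
    (H : ℝ → ℝ) (hH : ∀ x, H x = if 0 ≤ x then 1 else 0)
    (F : ℝ → ℝ) (hF : ∀ x, F x = (1 / n) * ∑ k : Fin n, H (x - s k)) :
    ∀ x ∈ Set.Icc (0 : ℝ) 1,
      F x = F 0 + ∑ j ∈ Finset.range q, (F ((x + j) / q) - F ((j : ℝ) / q)) :=
  stmt_13_general q n hq t ht s hs H hH F hF
end

section
/- Let q ≥ 2 be an integer, {X_n}_{n≥1} a stationary stochastic process with values in {0,...,q-1}, and F the CDF of X = Σ_{n≥1} X_n q^{-n}. Then the X_n are independent and identically distributed if and only if F(x) = Σ_{j=0}^{q-1} P(X₁ = j) F(qx − j) for all x ∈ [0,1]. -/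
/-!
Write `Y = (X₀ + Z) / q`, where `Z` is the value of the shifted digits; by stationarity `Z` has
the law of `Y`. Splitting `{Y ≤ x}` according to the first digit turns the functional equation
into `∑ⱼ [P(X₀ = j, Z ≤ qx - j) - P(X₀ = j) P(Z ≤ qx - j)] = 0`, and at `x = (t + j) / q` every
term but the `j`-th vanishes, so the functional equation says exactly that `X₀` is independent
of `Z`. The greedy `q`-adic expansion recovers the shifted digits from `Z` except on sequences
that end in `q - 1` without being constant, an event which stationarity makes null; so `X₀` is
independent of the whole shifted sequence. Stationarity propagates this to the independence of
all the digits, and it gives their identical distribution for free.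
-/

open MeasureTheory ProbabilityTheory Set Finset Filter

lemma isPiSystem_range_singleton {α : Type*} : IsPiSystem (range ({·} : α → Set α)) := by
  rintro _ ⟨a, rfl⟩ _ ⟨b, rfl⟩ ⟨x, hxa, hxb⟩
  rw [mem_singleton_iff] at hxa hxb
  subst hxa hxb
  exact ⟨x, (inter_self _).symm⟩

lemma generateFrom_range_singleton {α : Type*} [m : MeasurableSpace α] [Countable α]
    [MeasurableSingletonClass α] : MeasurableSpace.generateFrom (range ({·} : α → Set α)) = m := by
  refine le_antisymm (MeasurableSpace.generateFrom_le ?_) fun s _ => ?_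
  · rintro _ ⟨a, rfl⟩
    exact measurableSet_singleton a
  · rw [← s.biUnion_of_singleton]
    exact .biUnion s.to_countable fun a _ => MeasurableSpace.measurableSet_generateFrom ⟨a, rfl⟩

lemma indepFun_of_measure_inter_preimage_Iic {Ω α β : Type*} [MeasurableSpace Ω]
    {P : Measure Ω} [IsZeroOrProbabilityMeasure P] [MeasurableSpace α] [Countable α]
    [MeasurableSingletonClass α] [TopologicalSpace β] [LinearOrder β] [OrderTopology β]
    [SecondCountableTopology β] [MeasurableSpace β] [BorelSpace β] {X : Ω → α} {Z : Ω → β}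
    (hX : Measurable X) (hZ : Measurable Z)
    (h : ∀ a t, P (X ⁻¹' {a} ∩ Z ⁻¹' Iic t) = P (X ⁻¹' {a}) * P (Z ⁻¹' Iic t)) :
    IndepFun X Z P := by
  rw [IndepFun_iff_Indep]
  refine IndepSets.indep hX.comap_le hZ.comap_le (isPiSystem_range_singleton.comap X)
    (isPiSystem_Iic.comap Z) ?_ ?_ ?_
  · change _ = MeasurableSpace.generateFrom (preimage X '' range ({·} : α → Set α))
    rw [← MeasurableSpace.comap_generateFrom, generateFrom_range_singleton]
  · change _ = MeasurableSpace.generateFrom (preimage Z '' range Iic)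
    rw [← MeasurableSpace.comap_generateFrom, ← borel_eq_generateFrom_Iic,
      ← BorelSpace.measurable_eq]
  · rw [IndepSets_iff]
    rintro _ _ ⟨_, ⟨a, rfl⟩, rfl⟩ ⟨_, ⟨t, rfl⟩, rfl⟩
    exact h a t

lemma measure_eq_sum_measure_preimage_singleton_inter {Ω β : Type*} [MeasurableSpace Ω]
    {μ : Measure Ω} {f : Ω → β} (s : Finset β) (hs : ∀ ω, f ω ∈ s)
    (hf : ∀ b ∈ s, MeasurableSet (f ⁻¹' {b})) (A : Set Ω) :
    μ A = ∑ b ∈ s, μ (f ⁻¹' {b} ∩ A) := by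
  have key := sum_measure_preimage_singleton (μ := μ.restrict A) s hf
  rw [show f ⁻¹' (s : Set β) = univ from eq_univ_of_forall hs, Measure.restrict_apply_univ] at key
  rw [← key]
  exact sum_congr rfl fun b hb => Measure.restrict_apply (hf b hb)

lemma measure_inter_preimage_Iic_eq_mul_of_notMem_Ico {Ω : Type*} [MeasurableSpace Ω]
    {P : Measure Ω} [IsProbabilityMeasure P] {Z : Ω → ℝ} (hZ : ∀ ω, Z ω ∈ Icc (0 : ℝ) 1)
    (E : Set Ω) {s : ℝ} (hs : s ∉ Ico (0 : ℝ) 1) :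
    P (E ∩ Z ⁻¹' Iic s) = P E * P (Z ⁻¹' Iic s) := by
  rcases not_and_or.1 hs with hs | hs
  · have : Z ⁻¹' Iic s = ∅ := eq_empty_of_forall_notMem fun ω hω => hs ((hZ ω).1.trans hω)
    simp [this]
  · have : Z ⁻¹' Iic s = univ := eq_univ_of_forall fun ω => (hZ ω).2.trans (not_lt.1 hs)
    simp [this]

lemma eq_zero_of_sum_comp_mul_sub_eq_zero {q : ℕ} {a : ℕ → ℝ → ℝ}
    (ha : ∀ i, ∀ t ∉ Ico (0 : ℝ) 1, a i t = 0)
    (h : ∀ x ∈ Icc (0 : ℝ) 1, ∑ i ∈ range q, a i (q * x - i) = 0) {j : ℕ} (hj : j < q)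
    (t : ℝ) : a j t = 0 := by
  by_cases ht : t ∈ Ico (0 : ℝ) 1
  swap
  · exact ha j t ht
  have hq : (0 : ℝ) < q := by exact_mod_cast (by omega : 0 < q)
  have hjq : (j : ℝ) + 1 ≤ q := by exact_mod_cast hj
  have hx : (t + j) / q ∈ Icc (0 : ℝ) 1 :=
    ⟨by have := ht.1; positivity, (div_le_one hq).2 (by linarith [ht.2])⟩
  have hqx : (q : ℝ) * ((t + j) / q) = t + j := by field_simp
  have key := h _ hx
  rw [hqx, sum_eq_single_of_mem j (mem_range.2 hj) fun i _ hij => ha i _ ?_,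
    add_sub_cancel_right] at key
  · exact key
  rcases lt_or_gt_of_ne hij with hlt | hlt
  · have : (i : ℝ) + 1 ≤ j := by exact_mod_cast hlt
    exact fun hm => by linarith [hm.2, ht.1]
  · have : (j : ℝ) + 1 ≤ i := by exact_mod_cast hlt
    exact fun hm => by linarith [hm.1, ht.2]

lemma ProbabilityTheory.iIndepFun.indepFun_head_tail {Ω α : Type*} [MeasurableSpace Ω]
    [MeasurableSpace α] {P : Measure Ω} {X : ℕ → Ω → α} (hX : ∀ n, Measurable (X n))
    (h : iIndepFun X P) : IndepFun (X 0) (fun ω n => X (n + 1) ω) P := by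
  have hind := indep_iSup_of_disjoint (fun i => (hX i).comap_le) ((iIndepFun_iff_iIndep _ _ _).1 h)
    (disjoint_compl_right (a := ({0} : Set ℕ)))
  rw [IndepFun_iff_Indep]
  refine indep_of_indep_of_le_right (indep_of_indep_of_le_left hind ?_) ?_
  · exact le_iSup₂ (f := fun i (_ : i ∈ ({0} : Set ℕ)) => MeasurableSpace.comap (X i) _) 0 rfl
  · have htail : Measurable[⨆ i ∈ ({0}ᶜ : Set ℕ), MeasurableSpace.comap (X i) _]
        fun ω n => X (n + 1) ω :=
      @measurable_pi_lambda _ _ _ (_) _ _ fun n => Measurable.of_comap_le <|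
        le_iSup₂ (f := fun i (_ : i ∈ ({0}ᶜ : Set ℕ)) => MeasurableSpace.comap (X i) _)
          (n + 1) (by simp)
    exact htail.comap_le

noncomputable def digitValue (q : ℕ) (d : ℕ → ℕ) : ℝ :=
  ∑' n : ℕ, (d n : ℝ) / (q : ℝ) ^ (n + 1)

section DigitValue

variable {q : ℕ} {d : ℕ → ℕ}

lemma hasSum_sub_one_div_pow_succ (hq : 1 < q) :
    HasSum (fun n : ℕ => ((q : ℝ) - 1) / (q : ℝ) ^ (n + 1)) 1 := by
  have hq' : (1 : ℝ) < q := by exact_mod_cast hq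
  have hq1 : (q : ℝ) - 1 ≠ 0 := by linarith
  have h := (hasSum_geometric_of_lt_one (by positivity) (inv_lt_one_of_one_lt₀ hq')).mul_left
    (((q : ℝ) - 1) / q)
  rw [show ((q : ℝ) - 1) / q * (1 - (q : ℝ)⁻¹)⁻¹ = 1 by field_simp] at h
  have e : (fun n : ℕ => ((q : ℝ) - 1) / (q : ℝ) ^ (n + 1))
      = fun n : ℕ => ((q : ℝ) - 1) / q * (q : ℝ)⁻¹ ^ n := by
    funext n
    rw [pow_succ, inv_pow]
    field_simp
  rw [e]
  exact h

lemma div_pow_succ_le_sub_one_div_pow_succ {k : ℕ} (hk : k < q) (n : ℕ) :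
    (k : ℝ) / (q : ℝ) ^ (n + 1) ≤ ((q : ℝ) - 1) / (q : ℝ) ^ (n + 1) := by
  have : (k : ℝ) + 1 ≤ q := by exact_mod_cast hk
  exact div_le_div_of_nonneg_right (by linarith) (by positivity)

lemma summable_digitValue (hq : 1 < q) (hd : ∀ n, d n < q) :
    Summable (fun n : ℕ => (d n : ℝ) / (q : ℝ) ^ (n + 1)) :=
  (hasSum_sub_one_div_pow_succ hq).summable.of_nonneg_of_le (fun _ => by positivity)
    fun n => div_pow_succ_le_sub_one_div_pow_succ (hd n) n

lemma digitValue_nonneg : 0 ≤ digitValue q d := tsum_nonneg fun _ => by positivity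

lemma digitValue_le_one (hq : 1 < q) (hd : ∀ n, d n < q) : digitValue q d ≤ 1 :=
  hasSum_le (fun n => div_pow_succ_le_sub_one_div_pow_succ (hd n) n)
    (summable_digitValue hq hd).hasSum (hasSum_sub_one_div_pow_succ hq)

lemma digitValue_eq_one_iff (hq : 1 < q) (hd : ∀ n, d n < q) :
    digitValue q d = 1 ↔ ∀ n, d n = q - 1 := by
  constructor
  · intro h
    by_contra! hne
    obtain ⟨n, hn⟩ := hne
    have hlt : (d n : ℝ) < q - 1 := by
      have : d n + 1 < q := by have := hd n; omega
      have : (d n : ℝ) + 1 < q := by exact_mod_cast this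
      linarith
    exact (hasSum_lt (fun n => div_pow_succ_le_sub_one_div_pow_succ (hd n) n)
      (div_lt_div_of_pos_right hlt (by positivity)) (summable_digitValue hq hd).hasSum
      (hasSum_sub_one_div_pow_succ hq)).ne h
  · intro h
    have hcast : ∀ n, (d n : ℝ) = q - 1 := fun n => by rw [h n, Nat.cast_pred (by omega)]
    simp only [digitValue, hcast]
    exact (hasSum_sub_one_div_pow_succ hq).tsum_eq

lemma mul_digitValue (hq : 1 < q) (hd : ∀ n, d n < q) :
    q * digitValue q d = d 0 + digitValue q (fun n => d (n + 1)) := by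
  have hq0 : (q : ℝ) ≠ 0 := by positivity
  rw [digitValue, (summable_digitValue hq hd).tsum_eq_zero_add, mul_add, digitValue,
    ← tsum_mul_left]
  congr 1
  · simp [field]
  · refine tsum_congr fun n => ?_
    rw [pow_succ _ (n + 1)]
    field_simp

lemma digitValue_le_iff (hq : 1 < q) (hd : ∀ n, d n < q) (x : ℝ) :
    digitValue q d ≤ x ↔ digitValue q (fun n => d (n + 1)) ≤ q * x - d 0 := by
  rw [← mul_le_mul_iff_of_pos_left (by positivity : (0 : ℝ) < q), mul_digitValue hq hd]
  constructor <;> intro h <;> linarith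

lemma measurable_digitValue : Measurable (digitValue q) :=
  Measurable.tsum fun n => by fun_prop

end DigitValue

/-- Clamping at `q - 1` makes `1 = 0.(q-1)(q-1)…` a fixed point of `digitShift q`, so the
constant sequence `q - 1` is expanded correctly. -/
noncomputable def leadDigit (q : ℕ) (z : ℝ) : ℕ := min ⌊q * z⌋₊ (q - 1)

noncomputable def digitShift (q : ℕ) (z : ℝ) : ℝ := q * z - leadDigit q z

noncomputable def digitExpansion (q : ℕ) (z : ℝ) : ℕ → ℕ :=
  fun n => leadDigit q ((digitShift q)^[n] z)

section Expansion

variable {q : ℕ} {d : ℕ → ℕ}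

lemma leadDigit_digitValue (hq : 1 < q) (hd : ∀ n, d n < q)
    (hlast : digitValue q (fun n => d (n + 1)) = 1 → d 0 = q - 1) :
    leadDigit q (digitValue q d) = d 0 ∧
      digitShift q (digitValue q d) = digitValue q (fun n => d (n + 1)) := by
  have htail : ⌊digitValue q (fun n => d (n + 1))⌋₊ = 0 ∨ d 0 = q - 1 := by
    rcases (digitValue_le_one hq fun n => hd (n + 1)).lt_or_eq with h | h
    · exact .inl (Nat.floor_eq_zero.2 h)
    · exact .inr (hlast h)
  have hlead : leadDigit q (digitValue q d) = d 0 := by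
    rw [leadDigit, mul_digitValue hq hd, add_comm, Nat.floor_add_natCast digitValue_nonneg]
    have := hd 0
    omega
  refine ⟨hlead, ?_⟩
  rw [digitShift, hlead, mul_digitValue hq hd]
  ring

lemma digitExpansion_digitValue (hq : 1 < q) (hd : ∀ n, d n < q)
    (hconst : ∀ n, (∀ m, d (m + n + 1) = q - 1) → d n = q - 1) :
    digitExpansion q (digitValue q d) = d := by
  funext n
  induction n generalizing d with
  | zero =>
    refine (leadDigit_digitValue hq hd fun h => hconst 0 ?_).1
    exact (digitValue_eq_one_iff hq fun n => hd (n + 1)).1 h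
  | succ n ih =>
    have hshift := (leadDigit_digitValue hq hd fun h =>
      hconst 0 ((digitValue_eq_one_iff hq fun n => hd (n + 1)).1 h)).2
    rw [digitExpansion, Function.iterate_succ_apply, hshift]
    exact ih (fun n => hd (n + 1)) fun n h => hconst (n + 1) h

lemma measurable_leadDigit : Measurable (leadDigit q) :=
  (measurable_from_nat (f := fun k => min k (q - 1))).comp
    (Nat.measurable_floor.comp (measurable_const_mul (q : ℝ)))

lemma measurable_digitExpansion : Measurable (digitExpansion q) := by
  have hshift : Measurable (digitShift q) :=
    (measurable_const_mul _).sub (measurable_from_nat.comp measurable_leadDigit)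
  exact measurable_pi_lambda _ fun n => measurable_leadDigit.comp (hshift.iterate n)

end Expansion

def Stationary {Ω α : Type*} [MeasurableSpace Ω] [MeasurableSpace α] (P : Measure Ω)
    (X : ℕ → Ω → α) : Prop :=
  P.map (fun ω n => X (n + 1) ω) = P.map (fun ω n => X n ω)

namespace Stationary

variable {Ω α : Type*} [MeasurableSpace Ω] [MeasurableSpace α] {P : Measure Ω}
  {X : ℕ → Ω → α}

lemma map_comp_tail (h : Stationary P X) (hX : ∀ n, Measurable (X n)) {β : Type*}
    [MeasurableSpace β] {g : (ℕ → α) → β} (hg : Measurable g) :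
    P.map (fun ω => g fun n => X (n + 1) ω) = P.map (fun ω => g fun n => X n ω) := by
  calc P.map (fun ω => g fun n => X (n + 1) ω)
      = (P.map fun ω n => X (n + 1) ω).map g :=
        (Measure.map_map hg (measurable_pi_lambda _ fun n => hX (n + 1))).symm
    _ = (P.map fun ω n => X n ω).map g := by rw [h]
    _ = P.map fun ω => g fun n => X n ω := Measure.map_map hg (measurable_pi_lambda _ hX)

lemma tail (h : Stationary P X) (hX : ∀ n, Measurable (X n)) :
    Stationary P (fun n => X (n + 1)) :=
  h.map_comp_tail hX (measurable_pi_lambda _ fun n => measurable_pi_apply (n + 1))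

lemma map_shift (h : Stationary P X) (hX : ∀ n, Measurable (X n)) (k : ℕ) :
    P.map (fun ω n => X (n + k) ω) = P.map (fun ω n => X n ω) := by
  induction k generalizing X with
  | zero => rfl
  | succ k ih => exact (ih (h.tail hX) fun n => hX (n + 1)).trans h

lemma map_eq (h : Stationary P X) (hX : ∀ n, Measurable (X n)) (k : ℕ) :
    P.map (X k) = P.map (X 0) := by
  have key := congrArg (Measure.map fun s : ℕ → α => s 0) (h.map_shift hX k)
  rw [Measure.map_map (measurable_pi_apply 0) (measurable_pi_lambda _ fun n => hX (n + k)),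
    Measure.map_map (measurable_pi_apply 0) (measurable_pi_lambda _ hX)] at key
  simpa [Function.comp_def] using key

lemma measure_const_from_succ_and_ne [IsFiniteMeasure P] [MeasurableSingletonClass α]
    (h : Stationary P X) (hX : ∀ n, Measurable (X n)) (c : α) (n : ℕ) :
    P {ω | (∀ m, X (m + n + 1) ω = c) ∧ X n ω ≠ c} = 0 := by
  set A : ℕ → Set Ω := fun k => {ω | ∀ m, X (m + k) ω = c}
  have hS : MeasurableSet {s : ℕ → α | ∀ m, s m = c} := by
    rw [Set.ofPred_forall]
    exact .iInter fun m => (measurableSet_singleton c).preimage (measurable_pi_apply m)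
  have hA : ∀ k, P (A k) = P (A 0) := fun k => by
    have := congrArg (· {s : ℕ → α | ∀ m, s m = c}) (h.map_shift hX k)
    rwa [Measure.map_apply (measurable_pi_lambda _ fun n => hX (n + k)) hS,
      Measure.map_apply (measurable_pi_lambda _ hX) hS] at this
  have hsub : A n ⊆ A (n + 1) := fun ω hω m => by
    simpa only [add_right_comm, add_assoc] using hω (m + 1)
  have hAn : MeasurableSet (A n) :=
    measurable_pi_lambda _ (fun m => hX (m + n)) hS
  refine measure_mono_null (t := A (n + 1) \ A n)
    (fun ω hω => ⟨hω.1, fun h0 => hω.2 (by simpa using h0 0)⟩) ?_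
  rw [measure_sdiff hsub hAn.nullMeasurableSet (measure_ne_top _ _), hA, hA n, tsub_self]

lemma measure_forall_lt_mem_eq_prod [IsProbabilityMeasure P] (h : Stationary P X)
    (hX : ∀ n, Measurable (X n))
    (hind : IndepFun (X 0) (fun ω n => X (n + 1) ω) P) (m : ℕ) (B : ℕ → Set α)
    (hB : ∀ i, MeasurableSet (B i)) :
    P {ω | ∀ i < m, X i ω ∈ B i} = ∏ i ∈ range m, P (X i ⁻¹' B i) := by
  induction m generalizing B with
  | zero => simp
  | succ m ih =>
    have hC : MeasurableSet {s : ℕ → α | ∀ i < m, s i ∈ B (i + 1)} := by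
      simp only [Set.ofPred_forall]
      exact .iInter fun i => .iInter fun _ => (hB (i + 1)).preimage (measurable_pi_apply i)
    have hsplit : {ω | ∀ i < m + 1, X i ω ∈ B i}
        = X 0 ⁻¹' B 0 ∩ (fun ω n => X (n + 1) ω) ⁻¹' {s | ∀ i < m, s i ∈ B (i + 1)} := by
      ext ω
      exact Nat.forall_lt_succ_left'
    rw [hsplit, hind.meas_inter ⟨B 0, hB 0, rfl⟩ ⟨_, hC, rfl⟩,
      ← Measure.map_apply (measurable_pi_lambda _ fun n => hX (n + 1)) hC, h,
      Measure.map_apply (measurable_pi_lambda _ hX) hC]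
    rw [show (fun ω n => X n ω) ⁻¹' {s | ∀ i < m, s i ∈ B (i + 1)}
        = {ω | ∀ i < m, X i ω ∈ B (i + 1)} from rfl, ih _ fun i => hB (i + 1), prod_range_succ',
      mul_comm]
    congr 1
    refine prod_congr rfl fun i _ => ?_
    rw [← Measure.map_apply (hX i) (hB _), ← Measure.map_apply (hX _) (hB _), h.map_eq hX i,
      h.map_eq hX (i + 1)]

lemma iIndepFun_of_indepFun_tail [IsProbabilityMeasure P] (h : Stationary P X)
    (hX : ∀ n, Measurable (X n))
    (hind : IndepFun (X 0) (fun ω n => X (n + 1) ω) P) : iIndepFun X P := by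
  classical
  rw [iIndepFun_iff_measure_inter_preimage_eq_mul]
  intro S sets hsets
  have hS := S.subset_range_sup_succ
  set B : ℕ → Set α := fun i => if i ∈ S then sets i else univ
  have hB : ∀ i, MeasurableSet (B i) := fun i => by
    by_cases hi : i ∈ S <;> simp [B, hi, hsets]
  have hinter : ⋂ i ∈ S, X i ⁻¹' sets i = {ω | ∀ i < S.sup id + 1, X i ω ∈ B i} := by
    ext ω
    simp only [Set.mem_iInter, Set.mem_preimage, Set.mem_ofPred_eq, B]
    constructor
    · intro hω i _
      split_ifs with hi
      exacts [hω i hi, trivial]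
    · intro hω i hi
      simpa [hi] using hω i (mem_range.1 (hS hi))
  rw [hinter, measure_forall_lt_mem_eq_prod h hX hind _ B hB,
    ← prod_subset hS fun i _ hi => by simp [B, hi]]
  exact prod_congr rfl fun i hi => by simp [B, hi]

lemma iIndepFun_iff_indepFun_tail [IsProbabilityMeasure P] (h : Stationary P X)
    (hX : ∀ n, Measurable (X n)) :
    iIndepFun X P ↔ IndepFun (X 0) (fun ω n => X (n + 1) ω) P :=
  ⟨iIndepFun.indepFun_head_tail hX, h.iIndepFun_of_indepFun_tail hX⟩

end Stationary

section DigitProcess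

variable {Ω : Type*} [MeasurableSpace Ω] {P : Measure Ω} {q : ℕ}
  {X : ℕ → Ω → ℕ}

lemma Stationary.ae_digitExpansion_digitValue [IsProbabilityMeasure P] (hq : 1 < q)
    (hX : ∀ n, Measurable (X n))    (hval : ∀ n ω, X n ω < q) (h : Stationary P X) :
    ∀ᵐ ω ∂P, digitExpansion q (digitValue q fun n => X n ω) = fun n => X n ω := by
  rw [ae_iff]
  refine measure_mono_null ?_
    (measure_iUnion_null fun n => h.measure_const_from_succ_and_ne hX (q - 1) n)
  intro ω hω
  simp only [mem_iUnion, Set.mem_ofPred_eq]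
  by_contra! hgood
  exact hω (digitExpansion_digitValue hq (fun n => hval n ω) hgood)

lemma measure_digitValue_le_eq_sum (hq : 1 < q) (hX0 : Measurable (X 0))
    (hval : ∀ n ω, X n ω < q) (x : ℝ) :
    P {ω | digitValue q (fun n => X n ω) ≤ x}
      = ∑ j ∈ range q,
          P ({ω | X 0 ω = j} ∩ {ω | digitValue q (fun n => X (n + 1) ω) ≤ q * x - j}) := by
  rw [measure_eq_sum_measure_preimage_singleton_inter (range q) (fun ω => mem_range.2 (hval 0 ω))
    fun j _ => hX0 (measurableSet_singleton j)]
  refine sum_congr rfl fun j _ => congrArg P (ext fun ω => and_congr_right fun h0 => ?_)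
  rw [Set.mem_ofPred_eq, digitValue_le_iff hq fun n => hval n ω]
  exact h0 ▸ Iff.rfl

lemma Stationary.measure_digitValue_tail_le (h : Stationary P X) (hX : ∀ n, Measurable (X n))
    (t : ℝ) :
    P {ω | digitValue q (fun n => X (n + 1) ω) ≤ t}
      = P {ω | digitValue q (fun n => X n ω) ≤ t} := by
  have hm : ∀ Y : ℕ → Ω → ℕ, (∀ n, Measurable (Y n)) →
      Measurable fun ω => digitValue q fun n => Y n ω :=
    fun Y hY => measurable_digitValue.comp (measurable_pi_lambda _ hY)
  calc P {ω | digitValue q (fun n => X (n + 1) ω) ≤ t}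
      = P.map (fun ω => digitValue q fun n => X (n + 1) ω) (Iic t) :=
        (Measure.map_apply (hm _ fun n => hX (n + 1)) measurableSet_Iic).symm
    _ = P.map (fun ω => digitValue q fun n => X n ω) (Iic t) := by
        rw [h.map_comp_tail hX measurable_digitValue]
    _ = P {ω | digitValue q (fun n => X n ω) ≤ t} := Measure.map_apply (hm X hX) measurableSet_Iic

lemma indepFun_of_sum_measure_inter_preimage_Iic_eq [IsProbabilityMeasure P] {D : Ω → ℕ}
    {Z : Ω → ℝ} (hD : Measurable D) (hZ : Measurable Z) (hDq : ∀ ω, D ω < q)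
    (hZ01 : ∀ ω, Z ω ∈ Icc (0 : ℝ) 1)
    (h : ∀ x ∈ Icc (0 : ℝ) 1, ∑ j ∈ range q, (P (D ⁻¹' {j} ∩ Z ⁻¹' Iic (q * x - j))).toReal
      = ∑ j ∈ range q, (P (D ⁻¹' {j})).toReal * (P (Z ⁻¹' Iic (q * x - j))).toReal) :
    IndepFun D Z P := by
  refine indepFun_of_measure_inter_preimage_Iic hD hZ fun j t => ?_
  rcases lt_or_ge j q with hj | hj
  · have key := eq_zero_of_sum_comp_mul_sub_eq_zero
      (a := fun i s => (P (D ⁻¹' {i} ∩ Z ⁻¹' Iic s)).toReal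
        - (P (D ⁻¹' {i})).toReal * (P (Z ⁻¹' Iic s)).toReal)
      (fun i s hs => by
        rw [measure_inter_preimage_Iic_eq_mul_of_notMem_Ico hZ01 _ hs, ENNReal.toReal_mul,
          sub_self])
      (fun x hx => by rw [sum_sub_distrib, h x hx, sub_self]) hj t
    rw [sub_eq_zero, ← ENNReal.toReal_mul] at key
    exact (ENNReal.toReal_eq_toReal_iff' (measure_ne_top _ _)
      (ENNReal.mul_ne_top (measure_ne_top _ _) (measure_ne_top _ _))).1 key
  · have : D ⁻¹' {j} = ∅ := eq_empty_of_forall_notMem fun ω hω => (hDq ω).not_ge (hω ▸ hj)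
    simp [this]

lemma indepFun_digitValue_tail_iff [IsProbabilityMeasure P] (hq : 1 < q)
    (hX : ∀ n, Measurable (X n)) (hval : ∀ n ω, X n ω < q) (h : Stationary P X) :
    IndepFun (X 0) (fun ω => digitValue q fun n => X (n + 1) ω) P ↔
      ∀ x ∈ Icc (0 : ℝ) 1, (P {ω | digitValue q (fun n => X n ω) ≤ x}).toReal
        = ∑ j ∈ range q, (P {ω | X 0 ω = j}).toReal
            * (P {ω | digitValue q (fun n => X n ω) ≤ q * x - j}).toReal := by
  have hfe : ∀ x, (∑ j ∈ range q, (P ({ω | X 0 ω = j}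
        ∩ {ω | digitValue q (fun n => X (n + 1) ω) ≤ q * x - j})).toReal
      = ∑ j ∈ range q, (P {ω | X 0 ω = j}).toReal
        * (P {ω | digitValue q (fun n => X (n + 1) ω) ≤ q * x - j}).toReal) ↔
      (P {ω | digitValue q (fun n => X n ω) ≤ x}).toReal
        = ∑ j ∈ range q, (P {ω | X 0 ω = j}).toReal
          * (P {ω | digitValue q (fun n => X n ω) ≤ q * x - j}).toReal := fun x => by
    rw [measure_digitValue_le_eq_sum hq (hX 0) hval x,
      ENNReal.toReal_sum fun _ _ => measure_ne_top _ _]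
    simp only [h.measure_digitValue_tail_le hX]
  rw [← forall₂_congr fun x (_ : x ∈ Icc (0 : ℝ) 1) => hfe x]
  refine ⟨fun hind x _ => sum_congr rfl fun j _ => ?_, indepFun_of_sum_measure_inter_preimage_Iic_eq
    (hX 0) (measurable_digitValue.comp (measurable_pi_lambda _ fun n => hX (n + 1))) (hval 0)
    fun ω => ⟨digitValue_nonneg, digitValue_le_one hq fun n => hval (n + 1) ω⟩⟩
  rw [← ENNReal.toReal_mul]
  exact congrArg _ (hind.meas_inter ⟨{j}, measurableSet_singleton j, rfl⟩
    ⟨Iic _, measurableSet_Iic, rfl⟩)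

lemma indepFun_tail_iff_indepFun_digitValue [IsProbabilityMeasure P] (hq : 1 < q)
    (hX : ∀ n, Measurable (X n))    (hval : ∀ n ω, X n ω < q) (h : Stationary P X) :
    IndepFun (X 0) (fun ω n => X (n + 1) ω) P ↔
      IndepFun (X 0) (fun ω => digitValue q fun n => X (n + 1) ω) P :=
  ⟨fun hi => hi.comp measurable_id measurable_digitValue, fun hi =>
    (hi.comp measurable_id measurable_digitExpansion).congr EventuallyEq.rfl
      ((h.tail hX).ae_digitExpansion_digitValue hq (fun n => hX (n + 1)) fun n => hval (n + 1))⟩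

end DigitProcess

/-- Under stationarity, the digits are IID if and only if the CDF satisfies the
self-similarity equation `F(x) = Σ_j P(X₁=j) F(qx−j)` on `[0,1]`. -/
theorem stmt_14 {Ω : Type*} [MeasurableSpace Ω] (P : Measure Ω) [IsProbabilityMeasure P]
    (q : ℕ) (hq : 2 ≤ q) (X : ℕ → Ω → ℕ)
    (hmeas : ∀ n, Measurable (X n)) (hval : ∀ n ω, X n ω < q)
    (hstat : Measure.map (fun ω => fun n => X (n + 1) ω) P
      = Measure.map (fun ω => fun n => X n ω) P)
    (Y : Ω → ℝ) (hY : ∀ ω, Y ω = ∑' n : ℕ, (X n ω : ℝ) / (q : ℝ) ^ (n + 1))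
    (F : ℝ → ℝ) (hF : ∀ x, F x = (P {ω | Y ω ≤ x}).toReal) :
    (ProbabilityTheory.iIndepFun X P
        ∧ ∀ n, Measure.map (X n) P = Measure.map (X 0) P)
      ↔ ∀ x ∈ Set.Icc (0 : ℝ) 1,
          F x = ∑ j ∈ Finset.range q, (P {ω | X 0 ω = j}).toReal * F (q * x - j) := by
  obtain rfl : Y = fun ω => digitValue q fun n => X n ω := funext hY
  obtain rfl : F = fun x => (P {ω | digitValue q (fun n => X n ω) ≤ x}).toReal := funext hF
  have hstat' : Stationary P X := hstat
  rw [and_iff_left (hstat'.map_eq hmeas), hstat'.iIndepFun_iff_indepFun_tail hmeas,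
    indepFun_tail_iff_indepFun_digitValue hq hmeas hval hstat',
    indepFun_digitValue_tail_iff hq hmeas hval hstat']
end

section
/- Let q = 2 and suppose g : [0,1] → ℝ satisfies g(x) = 0 for x ∈ [0,1/2) and g((x+1)/2) = 2g(x) − 2/(2−x) for all x ∈ [0,1). Then the function f(x) = g(x) + 1/(1−x) on [0,1) satisfies f(x) = (1/2)[f(x/2) + f((x+1)/2)] for all x ∈ [0,1), but f is not Lebesgue integrable on [0,1]. -/
open MeasureTheory Filter Topology Finset

/-!
Absolute continuity of the integral rules out integrability once `|f|` carries a fixed amount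
of mass on sets of arbitrarily small measure. Such sets are found near `1`: for `1/2 < t ≤ 1`
the recursion unrolls to `f (1 - t / 2^n) = 2^n (1/t - ∑_{k<n} 1/(t + 2^k))`, and for
`t ∈ [11/12, 1]`, `n ≥ 4` the bracket is at most `12/11 - 103/90 < -1/20`. Hence `|f| ≥ 2^n/20`
on the strip `1 - t / 2^n`, `t ∈ [11/12, 1]`, of length `2^(-n)/12`, which thus carries
`∫ |f| ≥ 1/240`.
-/

theorem not_integrableOn_of_le_setLIntegral {α ι E : Type*} [MeasurableSpace α]
    [NormedAddCommGroup E] {μ : Measure α} {f : α → E} {s : Set α} {l : Filter ι} [l.NeBot]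
    {S : ι → Set α} (hSs : ∀ i, S i ⊆ s) (hS : Tendsto (fun i ↦ μ (S i)) l (𝓝 0))
    {ε : ENNReal} (hε : ε ≠ 0) (hfS : ∀ᶠ i in l, ε ≤ ∫⁻ x in S i, ‖f x‖ₑ ∂μ) :
    ¬ IntegrableOn f s μ := by
  intro hf
  have hS' : Tendsto (μ.restrict s ∘ S) l (𝓝 0) := by
    simpa only [Function.comp_def, Measure.restrict_eq_self _ (hSs _)] using hS
  have h := tendsto_setLIntegral_zero hf.2.ne hS'
  simp only [Measure.restrict_restrict_of_subset (hSs _)] at h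
  exact hε (nonpos_iff_eq_zero.1 (ge_of_tendsto h hfS))

theorem apply_one_sub_div_two_pow {f : ℝ → ℝ}
    (hf0 : ∀ x, 0 ≤ x → x < 1 / 2 → f x = 1 / (1 - x))
    (hfrec : ∀ y, 0 ≤ y → y < 1 → f ((y + 1) / 2) = 2 * f y - 2 / (2 - y))
    {t : ℝ} (ht₀ : 1 / 2 < t) (ht₁ : t ≤ 1) (n : ℕ) :
    f (1 - t / 2 ^ n) = 2 ^ n * (1 / t - ∑ k ∈ range n, 1 / (t + 2 ^ k)) := by
  induction n with
  | zero => simp [hf0 (1 - t) (by linarith) (by linarith)]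
  | succ n ih =>
    have hy₀ : 0 < t / 2 ^ n := by positivity
    have hy₁ : t / 2 ^ n ≤ 1 :=
      div_le_one_of_le₀ (ht₁.trans (one_le_pow₀ (by norm_num))) (by positivity)
    have hstep := hfrec (1 - t / 2 ^ n) (by linarith) (by linarith)
    rw [show (1 - t / 2 ^ n + 1) / 2 = 1 - t / 2 ^ (n + 1) by rw [pow_succ]; ring,
      show 2 - (1 - t / 2 ^ n) = (t + 2 ^ n) / 2 ^ n by field_simp; ring] at hstep
    have : t + 2 ^ n ≠ 0 := by positivity
    rw [hstep, ih, sum_range_succ, pow_succ]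
    field_simp
    ring

theorem le_sum_range_one_div_add_two_pow {t : ℝ} (ht₀ : 0 < t) (ht₁ : t ≤ 1) {n : ℕ}
    (hn : 4 ≤ n) :
    103 / 90 ≤ ∑ k ∈ range n, 1 / (t + 2 ^ k) := calc
  (103 / 90 : ℝ) = ∑ k ∈ range 4, 1 / (1 + 2 ^ k) := by norm_num [sum_range_succ]
  _ ≤ ∑ k ∈ range 4, 1 / (t + 2 ^ k) := sum_le_sum fun k _ ↦
    one_div_le_one_div_of_le (by positivity) (by linarith)
  _ ≤ ∑ k ∈ range n, 1 / (t + 2 ^ k) :=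
    sum_le_sum_of_subset_of_nonneg (range_subset_range.2 hn) fun k _ _ ↦ by positivity

def dyadicStrip (n : ℕ) : Set ℝ := Set.Icc (1 - 1 / 2 ^ n) (1 - 11 / 12 / 2 ^ n)

theorem dyadicStrip_subset_Icc (n : ℕ) : dyadicStrip n ⊆ Set.Icc 0 1 := by
  have : 1 / (2 : ℝ) ^ n ≤ 1 := div_le_one_of_le₀ (one_le_pow₀ (by norm_num)) (by positivity)
  exact Set.Icc_subset_Icc (by linarith) (sub_le_self _ (by positivity))

theorem volume_dyadicStrip (n : ℕ) :
    volume (dyadicStrip n) = ENNReal.ofReal (1 / 12 / 2 ^ n) := by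
  rw [dyadicStrip, Real.volume_Icc]
  ring_nf

theorem tendsto_volume_dyadicStrip : Tendsto (fun n ↦ volume (dyadicStrip n)) atTop (𝓝 0) := by
  simp only [volume_dyadicStrip]
  rw [← ENNReal.ofReal_zero]
  refine ENNReal.tendsto_ofReal ?_
  have h := (tendsto_pow_atTop_nhds_zero_of_lt_one (r := (1 / 2 : ℝ)) (by norm_num)
    (by norm_num)).const_mul (1 / 12)
  rw [mul_zero] at h
  exact h.congr fun n ↦ by rw [one_div_pow]; ring

theorem two_pow_div_le_abs_of_mem_dyadicStrip {f : ℝ → ℝ}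
    (hf0 : ∀ x, 0 ≤ x → x < 1 / 2 → f x = 1 / (1 - x))
    (hfrec : ∀ y, 0 ≤ y → y < 1 → f ((y + 1) / 2) = 2 * f y - 2 / (2 - y))
    {n : ℕ} (hn : 4 ≤ n) {y : ℝ} (hy : y ∈ dyadicStrip n) : 2 ^ n / 20 ≤ |f y| := by
  obtain ⟨hy₀, hy₁⟩ := hy
  have hpow : (0 : ℝ) < 2 ^ n := by positivity
  set t := 2 ^ n * (1 - y) with ht
  have ht₀ : 11 / 12 ≤ t := by
    rw [div_div, le_sub_comm, div_le_iff₀ (by positivity)] at hy₁; linarith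
  have ht₁ : t ≤ 1 := by
    rw [sub_le_comm, le_div_iff₀ hpow] at hy₀; linarith
  have hyt : y = 1 - t / 2 ^ n := by rw [ht]; field_simp; ring
  have hsum := le_sum_range_one_div_add_two_pow (by linarith) ht₁ hn
  have hinv : 1 / t ≤ 12 / 11 := by rw [div_le_div_iff₀ (by linarith) (by norm_num)]; linarith
  have hneg : f y ≤ -(2 ^ n / 20) := by
    rw [hyt, apply_one_sub_div_two_pow hf0 hfrec (by linarith) ht₁ n]
    nlinarith
  rw [abs_of_neg (by linarith)]
  linarith

theorem ofReal_le_setLIntegral_dyadicStrip {f : ℝ → ℝ}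
    (hf0 : ∀ x, 0 ≤ x → x < 1 / 2 → f x = 1 / (1 - x))
    (hfrec : ∀ y, 0 ≤ y → y < 1 → f ((y + 1) / 2) = 2 * f y - 2 / (2 - y))
    {n : ℕ} (hn : 4 ≤ n) : ENNReal.ofReal (1 / 240) ≤ ∫⁻ y in dyadicStrip n, ‖f y‖ₑ := calc
  ENNReal.ofReal (1 / 240) = ENNReal.ofReal (2 ^ n / 20) * volume (dyadicStrip n) := by
    rw [volume_dyadicStrip, ← ENNReal.ofReal_mul (by positivity)]
    congr 1
    field_simp
    norm_num
  _ = ∫⁻ _ in dyadicStrip n, ENNReal.ofReal (2 ^ n / 20) := (setLIntegral_const _ _).symm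
  _ ≤ ∫⁻ y in dyadicStrip n, ‖f y‖ₑ := setLIntegral_mono' measurableSet_Icc fun y hy ↦ by
    rw [Real.enorm_eq_ofReal_abs]
    exact ENNReal.ofReal_le_ofReal (two_pow_div_le_abs_of_mem_dyadicStrip hf0 hfrec hn hy)

theorem average_eq_of_dyadic_rec {f : ℝ → ℝ}
    (hf0 : ∀ x, 0 ≤ x → x < 1 / 2 → f x = 1 / (1 - x))
    (hfrec : ∀ y, 0 ≤ y → y < 1 → f ((y + 1) / 2) = 2 * f y - 2 / (2 - y))
    {x : ℝ} (hx₀ : 0 ≤ x) (hx₁ : x < 1) : f x = (f (x / 2) + f ((x + 1) / 2)) / 2 := by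
  rw [hfrec x hx₀ hx₁, hf0 (x / 2) (by linarith) (by linarith),
    show 1 - x / 2 = (2 - x) / 2 by ring, one_div_div]
  ring

/-- A solution of the averaging functional equation (for `q = 2`) on `[0,1)` which is not
Lebesgue integrable on `[0,1]`. -/
theorem stmt_16 (g : ℝ → ℝ)
    (hg0 : ∀ x : ℝ, 0 ≤ x → x < 1 / 2 → g x = 0)
    (hgrec : ∀ x : ℝ, 0 ≤ x → x < 1 → g ((x + 1) / 2) = 2 * g x - 2 / (2 - x))
    (f : ℝ → ℝ) (hf : ∀ x, f x = g x + 1 / (1 - x)) :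
    (∀ x : ℝ, 0 ≤ x → x < 1 → f x = (f (x / 2) + f ((x + 1) / 2)) / 2) ∧
      ¬ IntegrableOn f (Set.Icc 0 1) := by
  have hf0 (x : ℝ) (hx₀ : 0 ≤ x) (hx₁ : x < 1 / 2) : f x = 1 / (1 - x) := by
    rw [hf, hg0 x hx₀ hx₁, zero_add]
  have hfrec (y : ℝ) (hy₀ : 0 ≤ y) (hy₁ : y < 1) :
      f ((y + 1) / 2) = 2 * f y - 2 / (2 - y) := by
    rw [hf, hf, hgrec y hy₀ hy₁, show 1 - (y + 1) / 2 = (1 - y) / 2 by ring, one_div_div]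
    ring
  refine ⟨fun x ↦ average_eq_of_dyadic_rec hf0 hfrec, ?_⟩
  exact not_integrableOn_of_le_setLIntegral dyadicStrip_subset_Icc tendsto_volume_dyadicStrip
    (by positivity) (eventually_atTop.2 ⟨4, fun n ↦ ofReal_le_setLIntegral_dyadicStrip hf0 hfrec⟩)
end

section
/- Let q ≥ 2 be an integer and F a CDF on [0,1] satisfying the stationarity functional equation for all x ∈ [0,1]. Then F(j/q) − F(j/q − δ) → 0 as δ ↓ 0 for each j = 1,...,q−1; i.e., F has no jumps at the points 1/q, 2/q, ..., (q−1)/q. -/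
/-!
Subtracting the functional equation at `x = 1` and `x = 1 - δ` writes the increment
`F 1 - F (1 - δ)` as the sum of the increments of `F` over the `q` intervals
`((j + 1 - δ)/q, (j + 1)/q]`. For `j = k - 1` that interval ends at `k/q`, so its increment is at
least the jump of `F` at `k/q`; for `j = q - 1` it is `F 1 - F (1 - δ/q)`. Iterating with
`δ = q⁻ⁿ` gives `n · jump ≤ F 1 - F 0` for every `n`, so the jump vanishes.
-/

open MeasureTheory Filter Topology Set Function

theorem nonpos_of_forall_add_le_of_nonneg {u : ℕ → ℝ} {a : ℝ} (hu : ∀ n, 0 ≤ u n)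
    (h : ∀ n, a + u (n + 1) ≤ u n) : a ≤ 0 := by
  have hsum : ∀ n : ℕ, n * a + u n ≤ u 0 := by
    intro n
    induction n with
    | zero => simp
    | succ n ih => push_cast; linarith [h n]
  by_contra! ha
  obtain ⟨n, hn⟩ := exists_nat_gt (u 0 / a)
  have : u 0 < n * a := (div_lt_iff₀ ha).1 hn
  linarith [hsum n, hu n]

theorem Monotone.tendsto_sub_sub_leftLim {F : ℝ → ℝ} (hF : Monotone F) (c : ℝ) :
    Tendsto (fun δ => F c - F (c - δ)) (𝓝[>] 0) (𝓝 (F c - leftLim F c)) := by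
  have hleft : Tendsto (fun δ : ℝ => c - δ) (𝓝[>] 0) (𝓝[<] c) := by
    refine tendsto_nhdsWithin_of_tendsto_nhds_of_eventually_within _ ?_ ?_
    · simpa using (tendsto_const_nhds (x := c)).sub
        (tendsto_id.mono_left (nhdsWithin_le_nhds (a := (0 : ℝ)) (s := Ioi 0)))
    · filter_upwards [self_mem_nhdsWithin] with δ hδ
      simpa using hδ
  exact tendsto_const_nhds.sub ((hF.tendsto_leftLim c).comp hleft)

def IsStationaryCDF (q : ℕ) (F : ℝ → ℝ) : Prop :=
  ∀ x ∈ Icc (0 : ℝ) 1, F x = F 0 + ∑ j ∈ Finset.range q, (F ((x + j) / q) - F ((j : ℝ) / q))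

namespace IsStationaryCDF

variable {q : ℕ} {F : ℝ → ℝ}

theorem sub_eq_sum (h : IsStationaryCDF q F) {δ : ℝ} (hδ0 : 0 ≤ δ) (hδ1 : δ ≤ 1) :
    F 1 - F (1 - δ) = ∑ j ∈ Finset.range q, (F ((1 + j) / q) - F ((1 - δ + j) / q)) := by
  rw [h 1 ⟨zero_le_one, le_rfl⟩, h (1 - δ) ⟨by linarith, by linarith⟩, add_sub_add_left_eq_sub,
    ← Finset.sum_sub_distrib]
  exact Finset.sum_congr rfl fun j _ => by ring

theorem sub_leftLim_add_le (h : IsStationaryCDF q F) (hF : Monotone F) {k : ℕ} (hk : 1 ≤ k)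
    (hkq : k < q) {δ : ℝ} (hδ0 : 0 < δ) (hδ1 : δ ≤ 1) :
    F (k / q) - leftLim F (k / q) + (F 1 - F (1 - δ / q)) ≤ F 1 - F (1 - δ) := by
  have hq : (0 : ℝ) < q := by exact_mod_cast (hk.trans_lt hkq).trans_le' zero_le_one
  have hkcast : ((k - 1 : ℕ) : ℝ) = k - 1 := by rw [Nat.cast_sub hk, Nat.cast_one]
  have hqcast : ((q - 1 : ℕ) : ℝ) = q - 1 := by rw [Nat.cast_sub (by omega), Nat.cast_one]
  have hjump : F (k / q) - leftLim F (k / q) ≤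
      F ((1 + (k - 1 : ℕ)) / q) - F ((1 - δ + (k - 1 : ℕ)) / q) := by
    rw [hkcast, add_sub_cancel]
    have hlt : (1 - δ + (k - 1)) / q < k / q := by gcongr; linarith
    linarith [hF.le_leftLim hlt]
  have hlast :
      F ((1 + (q - 1 : ℕ)) / q) - F ((1 - δ + (q - 1 : ℕ)) / q) = F 1 - F (1 - δ / q) := by
    rw [hqcast]
    congr 2 <;> field_simp <;> ring
  have hincr : ∀ j ∈ Finset.range q, 0 ≤ F ((1 + j) / q) - F ((1 - δ + j) / q) :=
    fun j _ => sub_nonneg.2 (hF (by gcongr; linarith))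
  rw [h.sub_eq_sum hδ0.le hδ1, ← hlast]
  refine (add_le_add_left hjump _).trans (Finset.add_le_sum hincr ?_ ?_ (by omega)) <;>
    exact Finset.mem_range.2 (by omega)

theorem leftLim_eq (h : IsStationaryCDF q F) (hF : Monotone F) {k : ℕ} (hk : 1 ≤ k)
    (hkq : k < q) : leftLim F (k / q) = F (k / q) := by
  have hq : (1 : ℝ) ≤ q := by exact_mod_cast hk.trans hkq.le
  have hjump : F (k / q) - leftLim F (k / q) ≤ 0 := by
    refine nonpos_of_forall_add_le_of_nonneg (u := fun n => F 1 - F (1 - (q : ℝ)⁻¹ ^ n))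
      (fun n => sub_nonneg.2 (hF (by simp))) fun n => ?_
    have hstep := h.sub_leftLim_add_le hF hk hkq (δ := (q : ℝ)⁻¹ ^ n) (by positivity)
      (pow_le_one₀ (by positivity) (inv_le_one_of_one_le₀ hq))
    rwa [pow_succ, ← div_eq_mul_inv]
  linarith [hF.leftLim_le (le_refl ((k : ℝ) / q))]

end IsStationaryCDF

theorem stmt_18_general (q : ℕ) (μ : Measure ℝ) [IsProbabilityMeasure μ]
    (F : ℝ → ℝ) (hF : ∀ x, F x = (μ (Set.Iic x)).toReal)
    (heq : ∀ x ∈ Set.Icc (0 : ℝ) 1,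
      F x = F 0 + ∑ j ∈ Finset.range q, (F ((x + j) / q) - F ((j : ℝ) / q))) :
    ∀ j : ℕ, 1 ≤ j → j < q →
      Filter.Tendsto (fun δ : ℝ => F ((j : ℝ) / q) - F ((j : ℝ) / q - δ))
        (nhdsWithin 0 (Set.Ioi 0)) (nhds 0) := by
  have hmono : Monotone F := fun x y hxy => by
    simpa only [hF] using
      ENNReal.toReal_mono (measure_ne_top μ _) (measure_mono (Iic_subset_Iic.2 hxy))
  intro j hj hjq
  simpa [IsStationaryCDF.leftLim_eq heq hmono hj hjq] using hmono.tendsto_sub_sub_leftLim (j / q)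

/-- A CDF satisfying the stationarity functional equation has no jumps at the points
`j/q`, `j = 1, …, q−1`. -/
theorem stmt_18 (q : ℕ) (hq : 2 ≤ q) (μ : Measure ℝ) [IsProbabilityMeasure μ]
    (hsupp : μ (Set.Icc 0 1) = 1)
    (F : ℝ → ℝ) (hF : ∀ x, F x = (μ (Set.Iic x)).toReal)
    (heq : ∀ x ∈ Set.Icc (0 : ℝ) 1,
      F x = F 0 + ∑ j ∈ Finset.range q, (F ((x + j) / q) - F ((j : ℝ) / q))) :
    ∀ j : ℕ, 1 ≤ j → j < q →
      Filter.Tendsto (fun δ : ℝ => F ((j : ℝ) / q) - F ((j : ℝ) / q - δ))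
        (nhdsWithin 0 (Set.Ioi 0)) (nhds 0) :=
  stmt_18_general q μ F hF heq
end
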